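/- arXiv:1811.00444 — 13 statements merged into one kernel-verified Lean document; each statement's English description precedes it below -/
import Mathlib

section
/- Let P = {x ∈ ℝ^n : Ax = b, Bx ≤ d} be a pointed polyhedron, let g ∈ ker(A) \ {0}, and let B' be the maximal row-submatrix of B satisfying B'g = 0. Then g is a circuit direction of P if and only if rank of the stacked matrix (A; B') equals n−1. -/
/-!
The rows of `(A; B')` cut out `{y ∈ ker A : supp (B y) ⊆ supp (B g)}`, a subspace containing `g`.
Support-minimality of `B g` says exactly that this subspace is the line through `g`: any `y` in it
off that line gives `y - c g` of strictly smaller support, with `c` chosen to cancel a coordinate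
where `B g` is nonzero (one exists by pointedness). By rank–nullity the kernel is a line iff the
rank is `n - 1`.
-/

namespace Matrix

open _root_.Module Submodule Function

variable {K m p n : Type*} [Field K] [Fintype n]

theorem ker_mulVecLin_eq_span_singleton_iff_rank (M : Matrix m n K) {g : n → K} (hg : g ≠ 0)
    (hMg : M *ᵥ g = 0) :
    LinearMap.ker M.mulVecLin = K ∙ g ↔ M.rank = Fintype.card n - 1 := by
  have hspan : (K ∙ g) ≤ LinearMap.ker M.mulVecLin := (span_singleton_le_iff_mem _ _).2 hMg
  have hnullity : M.rank + finrank K (LinearMap.ker M.mulVecLin) = Fintype.card n := by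
    rw [rank, ← finrank_fintype_fun_eq_card K]
    exact LinearMap.finrank_range_add_finrank_ker _
  have hline := finrank_span_singleton (K := K) hg
  constructor
  · intro hker
    rw [hker, hline] at hnullity
    omega
  · intro hrank
    exact (eq_of_le_of_finrank_le hspan (by omega)).symm

theorem mulVecLin_injective_of_rank_eq_card (M : Matrix m n K) (h : M.rank = Fintype.card n) :
    Injective M.mulVecLin := by
  have hnullity := LinearMap.finrank_range_add_finrank_ker M.mulVecLin
  rw [finrank_fintype_fun_eq_card, ← rank, h, Nat.add_eq_left, finrank_eq_zero] at hnullity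
  exact LinearMap.ker_eq_bot.1 hnullity

theorem mulVec_fromRows_submatrix_eq_zero_iff {p' : Type*} (A : Matrix m n K) (B : Matrix p n K)
    (e : p' → p) (y : n → K) :
    fromRows A (B.submatrix e id) *ᵥ y = 0 ↔ A *ᵥ y = 0 ∧ ∀ i, (B *ᵥ y) (e i) = 0 := by
  rw [fromRows_mulVec, ← Sum.elim_zero_zero, Sum.elim_eq_iff]
  exact and_congr_right' funext_iff

variable {A : Matrix m n K} {B : Matrix p n K} {g : n → K}

/-- The paper's `B'`. -/
def vanishingRows (B : Matrix p n K) (g : n → K) : Matrix {j // (B *ᵥ g) j = 0} n K :=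
  B.submatrix Subtype.val id

theorem mem_ker_fromRows_vanishingRows_iff (y : n → K) :
    y ∈ LinearMap.ker (fromRows A (vanishingRows B g)).mulVecLin ↔
      A *ᵥ y = 0 ∧ support (B *ᵥ y) ⊆ support (B *ᵥ g) := by
  rw [LinearMap.mem_ker, mulVecLin_apply, vanishingRows, mulVec_fromRows_submatrix_eq_zero_iff,
    Subtype.forall]
  refine and_congr_right' ⟨fun h j hy hg => hy (h j hg), fun h j hg => ?_⟩
  exact notMem_support.1 (mt (@h j) (notMem_support.2 hg))

theorem self_mem_ker_fromRows_vanishingRows (hgA : A *ᵥ g = 0) :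
    g ∈ LinearMap.ker (fromRows A (vanishingRows B g)).mulVecLin :=
  (mem_ker_fromRows_vanishingRows_iff g).2 ⟨hgA, subset_rfl⟩

theorem exists_support_ssubset_of_notMem_span (hgA : A *ᵥ g = 0) {j₀ : p} (hj₀ : (B *ᵥ g) j₀ ≠ 0)
    {y : n → K} (hyA : A *ᵥ y = 0) (hyB : support (B *ᵥ y) ⊆ support (B *ᵥ g)) (hyg : y ∉ K ∙ g) :
    ∃ z, z ≠ 0 ∧ A *ᵥ z = 0 ∧ support (B *ᵥ z) ⊂ support (B *ᵥ g) := by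
  set c := (B *ᵥ y) j₀ / (B *ᵥ g) j₀
  have hBz : B *ᵥ (y - c • g) = B *ᵥ y - c • B *ᵥ g := by
    rw [mulVec_sub, mulVec_smul]
  refine ⟨y - c • g, fun h => hyg (mem_span_singleton.2 ⟨c, (sub_eq_zero.1 h).symm⟩), ?_, ?_, ?_⟩
  · rw [mulVec_sub, mulVec_smul, hgA, hyA, smul_zero, sub_zero]
  · rw [hBz]
    intro j hj hgj
    have hyj : (B *ᵥ y) j = 0 := not_not.1 fun h => hyB h hgj
    exact hj (by simp [hgj, hyj])
  · intro h
    have := h hj₀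
    simp [hBz, c, hj₀] at this

theorem mulVec_ne_zero_of_rank_fromRows (hAB : (fromRows A B).rank = Fintype.card n) (hg : g ≠ 0)
    (hgA : A *ᵥ g = 0) : B *ᵥ g ≠ 0 := fun hgB =>
  hg <| mulVecLin_injective_of_rank_eq_card _ hAB <| by
    rw [map_zero, mulVecLin_apply, fromRows_mulVec, hgA, hgB, Sum.elim_zero_zero]

theorem not_exists_support_ssubset_iff_ker_eq_span (hgA : A *ᵥ g = 0) (hgB : B *ᵥ g ≠ 0) :
    (¬ ∃ y, y ≠ 0 ∧ A *ᵥ y = 0 ∧ support (B *ᵥ y) ⊂ support (B *ᵥ g)) ↔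
      LinearMap.ker (fromRows A (vanishingRows B g)).mulVecLin = K ∙ g := by
  constructor
  · intro hmin
    obtain ⟨j₀, hj₀⟩ := Function.ne_iff.1 hgB
    refine le_antisymm (fun y hy => ?_) ((span_singleton_le_iff_mem _ _).2 ?_)
    · rw [mem_ker_fromRows_vanishingRows_iff] at hy
      by_contra hyg
      exact hmin (exists_support_ssubset_of_notMem_span hgA hj₀ hy.1 hy.2 hyg)
    · exact self_mem_ker_fromRows_vanishingRows hgA
  · rintro hker ⟨y, hy0, hyA, hyB⟩
    obtain ⟨c, rfl⟩ := mem_span_singleton.1 <|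
      hker ▸ (mem_ker_fromRows_vanishingRows_iff y).2 ⟨hyA, hyB.subset⟩
    have hc : c ≠ 0 := by rintro rfl; exact hy0 (zero_smul K g)
    exact hyB.ne (by rw [mulVec_smul, support_const_smul_of_ne_zero _ _ hc])

end Matrix

/-- For a pointed polyhedron `P = {x : Ax = b, Bx ≤ d}` and a nonzero
`g ∈ ker A`, letting `B'` be the maximal row-submatrix of `B` with `B'g = 0`,
`g` is a circuit direction of `P` (i.e. `Bg` is support-minimal over
`{Bx : x ∈ ker A \ {0}}`) iff `rank (A; B') = n - 1`. -/
theorem circuit_direction_iff_rank {n mA mB : ℕ}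
    (A : Matrix (Fin mA) (Fin n) ℝ) (B : Matrix (Fin mB) (Fin n) ℝ)
    (hpointed : (Matrix.fromRows A B).rank = n)
    (g : Fin n → ℝ) (hg0 : g ≠ 0) (hgA : A.mulVec g = 0) :
    (¬ ∃ y : Fin n → ℝ, y ≠ 0 ∧ A.mulVec y = 0 ∧
        {j | B.mulVec y j ≠ 0} ⊂ {j | B.mulVec g j ≠ 0}) ↔
    (Matrix.fromRows A (B.submatrix
        (fun i : {j : Fin mB // B.mulVec g j = 0} => (i : Fin mB)) id)).rank = n - 1 := by
  have hgB := Matrix.mulVec_ne_zero_of_rank_fromRows (by rwa [Fintype.card_fin]) hg0 hgA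
  have hM := Matrix.ker_mulVecLin_eq_span_singleton_iff_rank _ hg0
    (Matrix.self_mem_ker_fromRows_vanishingRows (B := B) hgA)
  rw [Fintype.card_fin] at hM
  exact (Matrix.not_exists_support_ssubset_iff_ker_eq_span hgA hgB).trans hM
end

section
/- Let P be pointed and let g ∈ ker(A) \ {0} be such that Bg is support-minimal over {Bx : x ∈ ker(A)\{0}}. If x' ∈ ker(A)\{0} satisfies supp(Bx') = supp(Bg), then x' = αg for some nonzero scalar α. -/
/-!
Subtracting from `x'` the multiple of `g` that cancels one coordinate `j` of `supp(Bg)` gives a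
vector of `ker A` whose `B`-support lies in `supp(Bg) \ {j}`. By minimality it is zero, and
`supp(Bg)` is nonempty because pointedness makes `B` injective on `ker A`.
-/

open Function

theorem Matrix.mulVec_injective_of_rank_eq {m n K : Type*} [Fintype m] [Fintype n] [Field K]
    (M : Matrix m n K) (h : M.rank = Fintype.card n) : Injective M.mulVec :=
  mulVec_injective_iff.2 <| linearIndependent_iff_card_eq_finrank_span.2 <| by
    rw [← h, rank_eq_finrank_span_cols, Set.finrank]

theorem Function.support_sub_smul_ssubset {ι K : Type*} [Field K] {u v : ι → K} {j : ι}
    (huv : support u ⊆ support v) (hj : v j ≠ 0) :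
    support (u - (u j / v j) • v) ⊂ support v := by
  refine ⟨(support_sub u _).trans (Set.union_subset huv (support_const_smul_subset _ _)),
    fun h ↦ ?_⟩
  simpa [div_mul_cancel₀ _ hj] using h hj

theorem eq_smul_of_support_eq_of_minimal {K M ι : Type*} [Field K] [AddCommGroup M] [Module K M]
    {V : Submodule K M} {f : M →ₗ[K] ι → K} (hf : ∀ x ∈ V, f x = 0 → x = 0)
    {g x : M} (hg0 : g ≠ 0) (hgV : g ∈ V)
    (hmin : ¬ ∃ y, y ≠ 0 ∧ y ∈ V ∧ support (f y) ⊂ support (f g))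
    (hxV : x ∈ V) (hsupp : support (f x) = support (f g)) :
    ∃ α : K, α ≠ 0 ∧ x = α • g := by
  obtain ⟨j, hj⟩ : (support (f g)).Nonempty :=
    Set.nonempty_iff_ne_empty.2 fun h ↦ hg0 (hf g hgV (support_eq_empty_iff.1 h))
  have hxj : f x j ≠ 0 := mem_support.1 (hsupp ▸ hj)
  refine ⟨f x j / f g j, div_ne_zero hxj hj, sub_eq_zero.1 ?_⟩
  by_contra hne
  refine hmin ⟨_, hne, V.sub_mem hxV (V.smul_mem _ hgV), ?_⟩
  simpa only [map_sub, map_smul] using support_sub_smul_ssubset hsupp.subset hj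

theorem eq_smul_of_supp_eq_general {n mA mB : ℕ}
    (A : Matrix (Fin mA) (Fin n) ℝ) (B : Matrix (Fin mB) (Fin n) ℝ)
    (hpointed : (Matrix.fromRows A B).rank = n)
    (g : Fin n → ℝ) (hg0 : g ≠ 0) (hgA : A.mulVec g = 0)
    (hmin : ¬ ∃ y : Fin n → ℝ, y ≠ 0 ∧ A.mulVec y = 0 ∧
      {j | B.mulVec y j ≠ 0} ⊂ {j | B.mulVec g j ≠ 0})
    (x' : Fin n → ℝ) (hx'A : A.mulVec x' = 0)
    (hsupp : {j | B.mulVec x' j ≠ 0} = {j | B.mulVec g j ≠ 0}) :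
    ∃ α : ℝ, α ≠ 0 ∧ x' = α • g := by
  have hB_inj : ∀ x ∈ LinearMap.ker A.mulVecLin, B.mulVecLin x = 0 → x = 0 := fun x hA hB ↦
    (Matrix.fromRows A B).mulVec_injective_of_rank_eq (by simpa using hpointed) <| by
      simp_all [Matrix.fromRows_mulVec]
  exact eq_smul_of_support_eq_of_minimal hB_inj hg0 hgA hmin hx'A hsupp

/-- If `P` is pointed, `g ∈ ker A \ {0}` has `Bg` support-minimal over
`{Bx : x ∈ ker A \ {0}}`, and `x' ∈ ker A \ {0}` satisfies `supp(Bx') = supp(Bg)`,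
then `x' = α • g` for some nonzero scalar `α`. -/
theorem eq_smul_of_supp_eq {n mA mB : ℕ}
    (A : Matrix (Fin mA) (Fin n) ℝ) (B : Matrix (Fin mB) (Fin n) ℝ)
    (hpointed : (Matrix.fromRows A B).rank = n)
    (g : Fin n → ℝ) (hg0 : g ≠ 0) (hgA : A.mulVec g = 0)
    (hmin : ¬ ∃ y : Fin n → ℝ, y ≠ 0 ∧ A.mulVec y = 0 ∧
      {j | B.mulVec y j ≠ 0} ⊂ {j | B.mulVec g j ≠ 0})
    (x' : Fin n → ℝ) (hx'0 : x' ≠ 0) (hx'A : A.mulVec x' = 0)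
    (hsupp : {j | B.mulVec x' j ≠ 0} = {j | B.mulVec g j ≠ 0}) :
    ∃ α : ℝ, α ≠ 0 ∧ x' = α • g :=
  eq_smul_of_supp_eq_general A B hpointed g hg0 hgA hmin x' hx'A hsupp
end

section
/- Let B ∈ ℝ^{m×n} be a matrix all of whose square subdeterminants (of every size) are nonzero, with m ≥ n−1. Then the number of circuits of the polyhedron {x : Bx ≤ d} equals 2·binomial(m, n−1); i.e., each choice of n−1 rows of B yields a distinct pair of opposite circuit directions. -/
/-!
Write `n = ν + 1` and let `Z(g)` be the set of rows on which `B g` vanishes. Nonsingularity of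
the `(ν+1)`-minors gives `#Z(g) ≤ ν` for `g ≠ 0`, and nonsingularity of the `ν`-minors makes the
vectors vanishing on a `ν`-set `R` of rows a line, on which `Z = R` away from `0`. Support-minimality
of `B g` is maximality of `Z(g)`, and every smaller zero set extends to a `ν`-set, so the circuits
are exactly the `g ≠ 0` with `#Z(g) = ν`: the two unit vectors on each of the `choose m ν` lines.
-/

open Finset

lemma ncard_setOf_norm_eq_one_mem_span_singleton {E : Type*} [NormedAddCommGroup E]
    [NormedSpace ℝ E] {v : E} (hv : v ≠ 0) : {g : E | ‖g‖ = 1 ∧ g ∈ ℝ ∙ v}.ncard = 2 := by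
  set u := ‖v‖⁻¹ • v
  have hu : ‖u‖ = 1 := norm_smul_inv_norm hv
  have hpair : {g : E | ‖g‖ = 1 ∧ g ∈ ℝ ∙ v} = {u, -u} := by
    ext g
    simp only [Set.mem_ofPred_eq, Set.mem_insert_iff, Set.mem_singleton_iff,
      Submodule.mem_span_singleton]
    constructor
    · rintro ⟨hg, c, rfl⟩
      have hc : |c| = ‖v‖⁻¹ := by
        rw [norm_smul, Real.norm_eq_abs] at hg
        exact eq_inv_of_mul_eq_one_left hg
      rcases (abs_eq (by positivity)).1 hc with rfl | rfl
      · exact Or.inl rfl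
      · exact Or.inr (neg_smul _ _)
    · rintro (rfl | rfl)
      · exact ⟨hu, _, rfl⟩
      · exact ⟨by rwa [norm_neg], -‖v‖⁻¹, neg_smul _ _⟩
  have hu0 : u ≠ 0 := norm_ne_zero_iff.1 (by rw [hu]; exact one_ne_zero)
  have hne : u ≠ -u := by
    rw [Ne, eq_neg_iff_add_eq_zero, ← two_smul ℝ, smul_eq_zero]
    norm_num [hu0]
  rw [hpair, Set.ncard_pair hne]

namespace Matrix

variable {K ι κ : Type*} [Field K]

def AllMinorsNonzero (B : Matrix ι κ K) : Prop :=
  ∀ (k : ℕ) (r : Fin k → ι) (c : Fin k → κ),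
    Function.Injective r → Function.Injective c → (B.submatrix r c).det ≠ 0

lemma AllMinorsNonzero.eq_zero_of_mulVec_comp_eq_zero {n : ℕ} {B : Matrix ι (Fin n) K}
    (hB : B.AllMinorsNonzero) {r : Fin n → ι} (hr : Function.Injective r) {g : Fin n → K}
    (hg : (B *ᵥ g) ∘ r = 0) : g = 0 :=
  eq_zero_of_mulVec_eq_zero (hB n r id hr Function.injective_id) hg

section

variable [Fintype ι] [DecidableEq K] {n : ℕ} {B : Matrix ι (Fin n) K} {g : Fin n → K}

def zeroRows (B : Matrix ι (Fin n) K) (g : Fin n → K) : Finset ι :=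
  {i | (B *ᵥ g) i = 0}

lemma mem_zeroRows {i : ι} : i ∈ zeroRows B g ↔ (B *ᵥ g) i = 0 := by
  simp [zeroRows]

lemma zeroRows_smul {c : K} (hc : c ≠ 0) : zeroRows B (c • g) = zeroRows B g := by
  ext i
  simp [mem_zeroRows, mulVec_smul, hc]

lemma setOf_mulVec_ne_zero_ssubset_iff {y : Fin n → K} :
    {i | (B *ᵥ y) i ≠ 0} ⊂ {i | (B *ᵥ g) i ≠ 0} ↔ zeroRows B g ⊂ zeroRows B y := by
  have h (v : Fin n → K) : {i | (B *ᵥ v) i ≠ 0} = (↑(zeroRows B v))ᶜ := by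
    ext i
    simp [mem_zeroRows]
  rw [h, h, compl_lt_compl_iff_lt, coe_ssubset]

lemma exists_ne_zero_subset_zeroRows (B : Matrix ι (Fin n) K) {R : Finset ι} (hR : #R < n) :
    ∃ v ≠ 0, R ⊆ zeroRows B v := by
  let f : (Fin n → K) →ₗ[K] (R → K) := (B.submatrix (↑) id).mulVecLin
  have hker : LinearMap.ker f ≠ ⊥ := LinearMap.ker_ne_bot_of_finrank_lt (by simpa using hR)
  obtain ⟨v, hv, hv0⟩ := Submodule.exists_mem_ne_zero_of_ne_bot hker
  exact ⟨v, hv0, fun i hi => mem_zeroRows.2 (congrFun (LinearMap.mem_ker.1 hv) ⟨i, hi⟩)⟩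

lemma AllMinorsNonzero.card_zeroRows_lt (hB : B.AllMinorsNonzero) (hg : g ≠ 0) :
    #(zeroRows B g) < n := by
  by_contra! h
  obtain ⟨e⟩ : Nonempty (Fin n ↪ zeroRows B g) :=
    Function.Embedding.nonempty_of_card_le (by simpa using h)
  exact hg <| hB.eq_zero_of_mulVec_comp_eq_zero (Subtype.val_injective.comp e.injective) <|
    funext fun k => mem_zeroRows.1 (e k).2

end

namespace AllMinorsNonzero

variable [Fintype ι] [DecidableEq K] {ν : ℕ} {B : Matrix ι (Fin (ν + 1)) K}
  (hB : B.AllMinorsNonzero) {R : Finset ι}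
include hB

lemma eq_zero_of_subset_zeroRows_of_apply_eq_zero (hR : #R = ν) {u : Fin (ν + 1) → K}
    (hu : R ⊆ zeroRows B u) {j : Fin (ν + 1)} (hj : u j = 0) : u = 0 := by
  obtain ⟨e⟩ : Nonempty (Fin ν ↪ R) := Function.Embedding.nonempty_of_card_le (by simp [hR])
  let r : Fin ν → ι := (↑) ∘ e
  have hN : (B.submatrix r j.succAbove).det ≠ 0 :=
    hB ν r j.succAbove (Subtype.val_injective.comp e.injective) Fin.succAbove_right_injective
  -- Since `u j = 0`, the equations on `R` only involve the columns other than `j`.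
  have hker : B.submatrix r j.succAbove *ᵥ (u ∘ j.succAbove) = 0 := by
    funext k
    have h0 : (B *ᵥ u) (r k) = 0 := mem_zeroRows.1 (hu (e k).2)
    rwa [mulVec, dotProduct, Fin.sum_univ_succAbove _ j, hj, mul_zero, zero_add] at h0
  have hu_succAbove := eq_zero_of_mulVec_eq_zero hN hker
  funext l
  rcases eq_or_ne l j with rfl | hl
  · exact hj
  · obtain ⟨t, rfl⟩ := Fin.exists_succAbove_eq hl
    exact congrFun hu_succAbove t

lemma mem_span_singleton_of_subset_zeroRows (hR : #R = ν) {v w : Fin (ν + 1) → K}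
    (hv0 : v ≠ 0) (hv : R ⊆ zeroRows B v) (hw : R ⊆ zeroRows B w) : w ∈ K ∙ v := by
  have hv0' : v 0 ≠ 0 := fun h => hv0 (hB.eq_zero_of_subset_zeroRows_of_apply_eq_zero hR hv h)
  set c := w 0 / v 0
  have hdiff : R ⊆ zeroRows B (w - c • v) := fun i hi => by
    simp [mem_zeroRows, mulVec_sub, mulVec_smul, mem_zeroRows.1 (hv hi), mem_zeroRows.1 (hw hi)]
  have hdiff0 : (w - c • v) 0 = 0 := by simp [c, div_mul_cancel₀ _ hv0']
  exact Submodule.mem_span_singleton.2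
    ⟨c, (sub_eq_zero.1 (hB.eq_zero_of_subset_zeroRows_of_apply_eq_zero hR hdiff hdiff0)).symm⟩

lemma zeroRows_eq_of_subset (hR : #R = ν) {v : Fin (ν + 1) → K} (hv0 : v ≠ 0)
    (hv : R ⊆ zeroRows B v) : zeroRows B v = R :=
  (eq_of_subset_of_card_le hv (by have := hB.card_zeroRows_lt hv0; omega)).symm

lemma zeroRows_eq_iff_mem_span (hR : #R = ν) {v g : Fin (ν + 1) → K} (hv0 : v ≠ 0)
    (hv : zeroRows B v = R) (hg : g ≠ 0) : zeroRows B g = R ↔ g ∈ K ∙ v := by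
  refine ⟨fun h => hB.mem_span_singleton_of_subset_zeroRows hR hv0 hv.ge h.ge, fun h => ?_⟩
  obtain ⟨c, rfl⟩ := Submodule.mem_span_singleton.1 h
  rw [zeroRows_smul (left_ne_zero_of_smul hg), hv]

lemma not_exists_support_ssubset_iff (hm : ν ≤ Fintype.card ι) {g : Fin (ν + 1) → K}
    (hg : g ≠ 0) :
    (¬ ∃ y : Fin (ν + 1) → K, y ≠ 0 ∧ {i | (B *ᵥ y) i ≠ 0} ⊂ {i | (B *ᵥ g) i ≠ 0}) ↔
      #(zeroRows B g) = ν := by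
  simp only [setOf_mulVec_ne_zero_ssubset_iff]
  have hg_lt := hB.card_zeroRows_lt hg
  constructor
  · intro hmin
    by_contra hne
    obtain ⟨R, hgR, -, hR⟩ := exists_subsuperset_card_eq (subset_univ (zeroRows B g))
      (by omega : #(zeroRows B g) ≤ ν) (by simpa using hm)
    obtain ⟨u, hu0, hRu⟩ := exists_ne_zero_subset_zeroRows B (R := R) (by omega)
    exact hmin ⟨u, hu0, (hgR.ssubset_of_ne (by rintro rfl; exact hne hR)).trans_subset hRu⟩
  · rintro hg_card ⟨y, hy0, hgy⟩
    have := card_lt_card hgy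
    have := hB.card_zeroRows_lt hy0
    omega

end AllMinorsNonzero

namespace AllMinorsNonzero

variable [Fintype ι] {ν : ℕ} {B : Matrix ι (Fin (ν + 1)) ℝ}

lemma ncard_setOf_norm_eq_one_zeroRows_eq (hB : B.AllMinorsNonzero) {R : Finset ι}
    (hR : #R = ν) : {g : Fin (ν + 1) → ℝ | ‖g‖ = 1 ∧ zeroRows B g = R}.ncard = 2 := by
  obtain ⟨v, hv0, hRv⟩ := exists_ne_zero_subset_zeroRows B (R := R) (by omega)
  have hv := hB.zeroRows_eq_of_subset hR hv0 hRv
  rw [← ncard_setOf_norm_eq_one_mem_span_singleton hv0]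
  congr 1
  ext g
  refine and_congr_right fun hg => hB.zeroRows_eq_iff_mem_span hR hv0 hv ?_
  rintro rfl
  simp at hg

lemma setOf_norm_eq_one_circuit_eq_biUnion (hB : B.AllMinorsNonzero)
    (hm : ν ≤ Fintype.card ι) :
    {g : Fin (ν + 1) → ℝ | ‖g‖ = 1 ∧
      ¬ ∃ y : Fin (ν + 1) → ℝ, y ≠ 0 ∧ {i | (B *ᵥ y) i ≠ 0} ⊂ {i | (B *ᵥ g) i ≠ 0}} =
      ⋃ R ∈ (↑(powersetCard ν (univ : Finset ι)) : Set (Finset ι)),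
        {g | ‖g‖ = 1 ∧ zeroRows B g = R} := by
  ext g
  simp only [Set.mem_ofPred_eq, Set.mem_iUnion, mem_coe, mem_powersetCard_univ, exists_prop]
  have hg0 (hg : ‖g‖ = 1) : g ≠ 0 := by rintro rfl; simp at hg
  have hcirc (hg : ‖g‖ = 1) := hB.not_exists_support_ssubset_iff hm (hg0 hg)
  exact ⟨fun ⟨hg, hmin⟩ => ⟨_, (hcirc hg).1 hmin, hg, rfl⟩,
    fun ⟨R, hR, hg, hgR⟩ => ⟨hg, (hcirc hg).2 (hgR ▸ hR)⟩⟩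

lemma ncard_setOf_norm_eq_one_circuit (hB : B.AllMinorsNonzero) (hm : ν ≤ Fintype.card ι) :
    {g : Fin (ν + 1) → ℝ | ‖g‖ = 1 ∧
      ¬ ∃ y : Fin (ν + 1) → ℝ, y ≠ 0 ∧ {i | (B *ᵥ y) i ≠ 0} ⊂ {i | (B *ᵥ g) i ≠ 0}}.ncard =
      2 * (Fintype.card ι).choose ν := by
  have hfiber R (hR : R ∈ powersetCard ν (univ : Finset ι)) :=
    hB.ncard_setOf_norm_eq_one_zeroRows_eq (mem_powersetCard_univ.1 hR)
  rw [hB.setOf_norm_eq_one_circuit_eq_biUnion hm, Set.Finite.ncard_biUnion (finite_toSet _)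
      (fun R hR => Set.finite_of_ncard_pos (by rw [hfiber R hR]; omega))
      (fun R _ R' _ hne => Set.disjoint_left.2 fun g hg hg' => hne (hg.2.symm.trans hg'.2)),
    finsum_mem_coe_finset, sum_congr rfl hfiber, sum_const, card_powersetCard, card_univ,
    smul_eq_mul, mul_comm]

end AllMinorsNonzero
end Matrix

/-- If every square subdeterminant of `B : ℝ^{m×n}` is nonzero and
`m ≥ n - 1`, then the polyhedron `{x : Bx ≤ d}` has exactly `2 * (m choose (n-1))`
circuits: counting one representative of each circuit direction per sign
(normalized here to norm one, so each direction line contributes two vectors). -/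
theorem card_circuits_of_nonzero_subdets {m n : ℕ} (hn : 1 ≤ n) (hm : n - 1 ≤ m)
    (B : Matrix (Fin m) (Fin n) ℝ)
    (hdet : ∀ (k : ℕ) (r : Fin k → Fin m) (c : Fin k → Fin n),
      Function.Injective r → Function.Injective c → (B.submatrix r c).det ≠ 0) :
    {g : Fin n → ℝ | ‖g‖ = 1 ∧
        ¬ ∃ y : Fin n → ℝ, y ≠ 0 ∧
          {j | B.mulVec y j ≠ 0} ⊂ {j | B.mulVec g j ≠ 0}}.ncard
      = 2 * Nat.choose m (n - 1) := by
  obtain ⟨ν, rfl⟩ : ∃ ν, n = ν + 1 := ⟨n - 1, by omega⟩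
  rw [Nat.add_sub_cancel] at hm ⊢
  simpa using Matrix.AllMinorsNonzero.ncard_setOf_norm_eq_one_circuit hdet (by simpa using hm)
end

section
/- Let B ∈ ℝ^{m×n} have all subdeterminants nonzero, let B' be a (d−1)×d submatrix with row set I and column set J, and let g ∈ ℝ^n be the zero-padded extension of a kernel generator g' of B'. Then for every row index i ∉ I, (Bg)_i ≠ 0; hence supp(Bg) is exactly the complement of I. -/
/-!
A zero row of `B g` at some `i` outside the rows of `B'` would put `g'` into the kernel of the
square submatrix of `B` with rows those of `B'` together with `i` and columns those of `B'`.
That submatrix is nonsingular, so `g' = 0`, contradicting that `g'` has nonzero entries.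
-/

open Matrix

namespace Matrix

variable {ι κ ν R : Type*}

theorem mulVec_eq_submatrix_mulVec_of_support_subset_range [Fintype κ] [Fintype ν]
    [NonUnitalNonAssocSemiring R] (A : Matrix ι ν R) {c : κ → ν} (hc : Function.Injective c)
    {v : κ → R} {w : ν → R} (hwc : ∀ j, w (c j) = v j)
    (hwz : ∀ l, (∀ j, l ≠ c j) → w l = 0) :
    A *ᵥ w = A.submatrix id c *ᵥ v := by
  ext i
  refine (Fintype.sum_of_injective c hc _ _ (fun l hl ↦ ?_) fun j ↦ by simp [hwc]).symm
  simp [hwz l fun j hj ↦ hl ⟨j, hj.symm⟩]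

theorem exists_mulVec_apply_ne_zero_of_det_submatrix_ne_zero [Fintype κ] [DecidableEq κ]
    [CommRing R] [NoZeroDivisors R] (A : Matrix ι κ R) {ρ : κ → ι}
    (hdet : (A.submatrix ρ id).det ≠ 0) {v : κ → R} (hv : v ≠ 0) :
    ∃ j, (A *ᵥ v) (ρ j) ≠ 0 := by
  by_contra! h
  exact hv (eq_zero_of_mulVec_eq_zero hdet (funext h))

end Matrix

theorem support_of_extended_kernel_vector_general {m n d : ℕ} (hd2 : 2 ≤ d)
    (B : Matrix (Fin m) (Fin n) ℝ)
    (hdet : ∀ (k : ℕ) (r : Fin k → Fin m) (c : Fin k → Fin n),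
      Function.Injective r → Function.Injective c → (B.submatrix r c).det ≠ 0)
    (r : Fin (d - 1) → Fin m) (c : Fin d → Fin n)
    (hr : Function.Injective r) (hc : Function.Injective c)
    (g' : Fin d → ℝ) (hg'ne : ∀ i, g' i ≠ 0)
    (hg'ker : (B.submatrix r c).mulVec g' = 0)
    (g : Fin n → ℝ) (hgc : ∀ i, g (c i) = g' i)
    (hgz : ∀ j : Fin n, (∀ i, j ≠ c i) → g j = 0) :
    (∀ i : Fin m, (∀ i', i ≠ r i') → B.mulVec g i ≠ 0) ∧
      {i : Fin m | B.mulVec g i ≠ 0} = {i : Fin m | ∀ i', i ≠ r i'} := by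
  obtain ⟨k, rfl⟩ : ∃ k, d = k + 1 := ⟨d - 1, by omega⟩
  have hBg := B.mulVec_eq_submatrix_mulVec_of_support_subset_range hc hgc hgz
  have hrows : ∀ i', (B *ᵥ g) (r i') = 0 := fun i' ↦ hBg ▸ congrFun hg'ker i'
  have hne : ∀ i, (∀ i', i ≠ r i') → (B *ᵥ g) i ≠ 0 := by
    intro i hi
    have hρ : Function.Injective (Fin.cons i r : Fin (k + 1) → Fin m) :=
      Fin.cons_injective_iff.2 ⟨fun ⟨i', hi'⟩ ↦ hi i' hi'.symm, hr⟩
    obtain ⟨j, hj⟩ := (B.submatrix id c).exists_mulVec_apply_ne_zero_of_det_submatrix_ne_zero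
      (hdet _ _ c hρ hc) (v := g') fun h ↦ hg'ne 0 (congrFun h 0)
    rw [← hBg] at hj
    induction j using Fin.cases with
    | zero => exact hj
    | succ i' => exact absurd (hrows i') hj
  exact ⟨hne, Set.ext fun i ↦ ⟨fun h i' hi' ↦ h (hi' ▸ hrows i'), hne i⟩⟩

/-- With all square subdeterminants of `B` nonzero, let `B'` be a
`(d-1) × d` submatrix (rows `r`, columns `c`), `g'` a kernel generator of `B'` with all
components nonzero, and `g` the zero-padded extension of `g'` to `ℝ^n`. Then
`(Bg)_i ≠ 0` for every row `i` outside the rows of `B'`; hence `supp(Bg)` is exactly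
the complement of the chosen row set. -/
theorem support_of_extended_kernel_vector {m n d : ℕ} (hd2 : 2 ≤ d) (hdn : d ≤ n)
    (B : Matrix (Fin m) (Fin n) ℝ)
    (hdet : ∀ (k : ℕ) (r : Fin k → Fin m) (c : Fin k → Fin n),
      Function.Injective r → Function.Injective c → (B.submatrix r c).det ≠ 0)
    (r : Fin (d - 1) → Fin m) (c : Fin d → Fin n)
    (hr : Function.Injective r) (hc : Function.Injective c)
    (g' : Fin d → ℝ) (hg'ne : ∀ i, g' i ≠ 0)
    (hg'ker : (B.submatrix r c).mulVec g' = 0)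
    (g : Fin n → ℝ) (hgc : ∀ i, g (c i) = g' i)
    (hgz : ∀ j : Fin n, (∀ i, j ≠ c i) → g j = 0) :
    (∀ i : Fin m, (∀ i', i ≠ r i') → B.mulVec g i ≠ 0) ∧
      {i : Fin m | B.mulVec g i ≠ 0} = {i : Fin m | ∀ i', i ≠ r i'} :=
  support_of_extended_kernel_vector_general hd2 B hdet r c hr hc g' hg'ne hg'ker g hgc hgz
end

section
/- Let P = {x ∈ ℝ^n : Ax = b, Bx ≤ d} be pointed. If g is a circuit of P, then the pair (g, Bg) is a circuit of the standard-form system with constraint matrix (A 0; B I), i.e., (g, Bg) is support-minimal in the kernel of that matrix. -/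
/-!
Let `w = (y, -By)` lie in the kernel with support strictly inside that of `(g, -Bg)`. Then
`supp By ⊆ supp Bg`, and `By ≠ 0` because `Ay = 0`, `y ≠ 0` and `P` is pointed. Using `y` to
eliminate one coordinate of `Bg` produces `g - c y ∈ ker A` whose `B`-image has strictly smaller
support, so minimality of `g` forces `g = c y`. But then `(g, -Bg) = c w`, whose support lies
inside that of `w`.
-/

open Function Matrix

theorem Matrix.eq_zero_of_mulVec_eq_zero_of_rank_eq_card {K m n : Type*} [Field K] [Fintype n]
    {M : Matrix m n K} (hM : M.rank = Fintype.card n) {x : n → K} (hx : M *ᵥ x = 0) :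
    x = 0 := by
  have hker : Module.finrank K (LinearMap.ker M.mulVecLin) = 0 := by
    have := M.mulVecLin.finrank_range_add_finrank_ker
    rw [Module.finrank_fintype_fun_eq_card, ← Matrix.rank, hM] at this
    omega
  have hx' : x ∈ LinearMap.ker M.mulVecLin := hx
  simpa [Submodule.finrank_eq_zero.mp hker] using hx'

theorem Function.support_sub_div_smul_ssubset {ι K : Type*} [Field K] {u v : ι → K}
    (hvu : support v ⊆ support u) {i : ι} (hi : v i ≠ 0) :
    support (u - (u i / v i) • v) ⊂ support u := by
  have hsub : support (u - (u i / v i) • v) ⊆ support u :=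
    (support_sub _ _).trans (Set.union_subset le_rfl ((support_const_smul_subset _ _).trans hvu))
  refine (Set.ssubset_iff_of_subset hsub).mpr ⟨i, hvu hi, ?_⟩
  simp [div_mul_cancel₀ _ hi]

theorem Matrix.exists_eq_smul_of_support_mulVec_subset {K m l n : Type*} [Field K] [Fintype n]
    {A : Matrix m n K} {B : Matrix l n K} {g y : n → K}
    (hmin : ¬ ∃ x : n → K, x ≠ 0 ∧ A *ᵥ x = 0 ∧ support (B *ᵥ x) ⊂ support (B *ᵥ g))
    (hgA : A *ᵥ g = 0) (hyA : A *ᵥ y = 0) (hyB : B *ᵥ y ≠ 0)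
    (hsupp : support (B *ᵥ y) ⊆ support (B *ᵥ g)) :
    ∃ c : K, g = c • y := by
  obtain ⟨i, hi⟩ := Function.ne_iff.mp hyB
  refine ⟨(B *ᵥ g) i / (B *ᵥ y) i, sub_eq_zero.mp ?_⟩
  by_contra hne
  refine hmin ⟨_, hne, by simp [mulVec_sub, mulVec_smul, hgA, hyA], ?_⟩
  rw [mulVec_sub, mulVec_smul]
  exact support_sub_div_smul_ssubset hsupp hi

theorem circuit_gives_standard_form_circuit_general {n mA mB : ℕ}
    (A : Matrix (Fin mA) (Fin n) ℝ) (B : Matrix (Fin mB) (Fin n) ℝ)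
    (hpointed : (Matrix.fromRows A B).rank = n)
    (g : Fin n → ℝ) (hgA : A.mulVec g = 0)
    (hmin : ¬ ∃ y : Fin n → ℝ, y ≠ 0 ∧ A.mulVec y = 0 ∧
      {j | B.mulVec y j ≠ 0} ⊂ {j | B.mulVec g j ≠ 0}) :
    ¬ ∃ w : (Fin n ⊕ Fin mB) → ℝ, w ≠ 0 ∧
      A.mulVec (w ∘ Sum.inl) = 0 ∧
      (∀ i, w (Sum.inr i) = -(B.mulVec (w ∘ Sum.inl) i)) ∧
      {j | w j ≠ 0} ⊂ {j | Sum.elim g (fun i => -(B.mulVec g i)) j ≠ 0} := by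
  rintro ⟨w, hw0, hyA, hwB, hssub⟩
  set y := w ∘ Sum.inl
  have hw : w = Sum.elim y (-(B *ᵥ y)) := by
    ext (j | i)
    · rfl
    · simp [hwB]
  have hy0 : y ≠ 0 := fun hy => hw0 (by simp [hw, hy])
  have hyB : B *ᵥ y ≠ 0 := fun hyB => hy0 <|
    eq_zero_of_mulVec_eq_zero_of_rank_eq_card (by rwa [Fintype.card_fin])
      (by rw [fromRows_mulVec, hyA, hyB, Sum.elim_zero_zero])
  have hsupp : support (B *ᵥ y) ⊆ support (B *ᵥ g) := fun i hi => by
    simpa using hssub.1 (show w (Sum.inr i) ≠ 0 by simpa [hwB] using hi)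
  obtain ⟨c, hc⟩ := exists_eq_smul_of_support_mulVec_subset hmin hgA hyA hyB hsupp
  have hgw : Sum.elim g (fun i => -(B *ᵥ g) i) = c • w := by
    ext (j | i) <;> simp [hw, hc, mulVec_smul]
  exact hssub.2 (hgw ▸ support_const_smul_subset c w)

/-- If `g` is a circuit of the pointed polyhedron
`P = {x : Ax = b, Bx ≤ d}`, then the pair `(g, -Bg)` (which lies in the kernel of the
standard-form matrix `(A 0; B I)`) is a circuit of that standard-form system, i.e. it is
support-minimal over the nonzero elements of that kernel. -/
theorem circuit_gives_standard_form_circuit {n mA mB : ℕ}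
    (A : Matrix (Fin mA) (Fin n) ℝ) (B : Matrix (Fin mB) (Fin n) ℝ)
    (hpointed : (Matrix.fromRows A B).rank = n)
    (g : Fin n → ℝ) (hg0 : g ≠ 0) (hgA : A.mulVec g = 0)
    (hmin : ¬ ∃ y : Fin n → ℝ, y ≠ 0 ∧ A.mulVec y = 0 ∧
      {j | B.mulVec y j ≠ 0} ⊂ {j | B.mulVec g j ≠ 0}) :
    ¬ ∃ w : (Fin n ⊕ Fin mB) → ℝ, w ≠ 0 ∧
      A.mulVec (w ∘ Sum.inl) = 0 ∧
      (∀ i, w (Sum.inr i) = -(B.mulVec (w ∘ Sum.inl) i)) ∧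
      {j | w j ≠ 0} ⊂ {j | Sum.elim g (fun i => -(B.mulVec g i)) j ≠ 0} :=
  circuit_gives_standard_form_circuit_general A B hpointed g hgA hmin
end

section
/- Let P = {x : Ax = b, Bx ≤ d} be pointed. Every vector of the form (g, y⁺, y⁻), where g is a circuit of P, y⁺_i = max{(Bg)_i, 0}, y⁻_i = max{−(Bg)_i, 0}, is an extreme ray of the cone C = {(x, y⁺, y⁻) : Ax = 0, Bx = y⁺ − y⁻, y⁺ ≥ 0, y⁻ ≥ 0}. -/
/-!
Pointedness forces `Bg ≠ 0`, so pick `i₀` with `(Bg)ᵢ₀ ≠ 0`. The support conditions make `y'⁺` live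
where `Bg > 0` and `y'⁻` where `Bg < 0`, hence `supp (Bx') ⊆ supp (Bg)`. For
`α = (Bx')ᵢ₀ / (Bg)ᵢ₀` the vector `x' - α g` lies in `ker A` and its `B`-support misses `i₀`, so it
vanishes by minimality of the circuit `g`. Then `y'⁺ - y'⁻ = α (y⁺ - y⁻)` with matching sign
patterns splits into `y'⁺ = α y⁺` and `y'⁻ = α y⁻`. Finally `α ≠ 0` as `(x', y'⁺, y'⁻) ≠ 0`, and
`α ≥ 0` because `0 ≤ y'⁺ + y'⁻ = α |Bg|`.
-/

open Function Matrix

theorem Matrix.mulVec_injective_of_rank_eq_card {K m n : Type*} [Field K] [Fintype n]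
    {M : Matrix m n K} (h : M.rank = Fintype.card n) : Injective M.mulVec :=
  mulVec_injective_iff.mpr <| linearIndependent_iff_card_eq_finrank_span.mpr <| by
    rw [← h, rank_eq_finrank_span_cols]
    rfl

theorem Matrix.mulVec_ne_zero_of_rank_fromRows_s6 {K m₁ m₂ n : Type*} [Field K] [Fintype n]
    {A : Matrix m₁ n K} {B : Matrix m₂ n K} (h : (fromRows A B).rank = Fintype.card n)
    {g : n → K} (hg : g ≠ 0) (hgA : A *ᵥ g = 0) : B *ᵥ g ≠ 0 := fun hgB =>
  hg <| mulVec_injective_of_rank_eq_card h <| by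
    rw [fromRows_mulVec, hgA, hgB, mulVec_zero, Sum.elim_zero_zero]

theorem Matrix.eq_smul_of_support_mulVec_subset {K m n p : Type*} [Field K] [Fintype n]
    {A : Matrix p n K} {B : Matrix m n K} {g x : n → K}
    (hmin : ¬ ∃ y : n → K, y ≠ 0 ∧ A *ᵥ y = 0 ∧ support (B *ᵥ y) ⊂ support (B *ᵥ g))
    (hgA : A *ᵥ g = 0) (hxA : A *ᵥ x = 0) (hsupp : support (B *ᵥ x) ⊆ support (B *ᵥ g))
    {i : m} (hi : (B *ᵥ g) i ≠ 0) :
    x = ((B *ᵥ x) i / (B *ᵥ g) i) • g := by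
  set α := (B *ᵥ x) i / (B *ᵥ g) i
  by_contra hne
  have hBz : B *ᵥ (x - α • g) = B *ᵥ x - α • B *ᵥ g := by
    rw [mulVec_sub, mulVec_smul]
  have hsub : support (B *ᵥ (x - α • g)) ⊆ support (B *ᵥ g) := by
    rw [hBz]
    exact (support_sub _ _).trans
      (Set.union_subset hsupp (support_const_smul_subset α _))
  refine hmin ⟨x - α • g, sub_ne_zero.mpr hne, by rw [mulVec_sub, mulVec_smul, hxA, hgA,
    smul_zero, sub_zero], (Set.ssubset_iff_of_subset hsub).mpr ⟨i, hi, ?_⟩⟩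
  simp only [hBz, mem_support, Pi.sub_apply, Pi.smul_apply, smul_eq_mul, α, not_not]
  field_simp
  ring

theorem eq_mul_max_zero_of_sub_eq_mul {R : Type*} [CommRing R] [LinearOrder R]
    [IsStrictOrderedRing R] {a p q α : R} (hp : p ≠ 0 → 0 < a) (hq : q ≠ 0 → a < 0)
    (h : p - q = α * a) : p = α * max a 0 ∧ q = α * max (-a) 0 := by
  have hp0 : a ≤ 0 → p = 0 := fun ha => by_contra fun hp' => (hp hp').not_ge ha
  have hq0 : 0 ≤ a → q = 0 := fun ha => by_contra fun hq' => (hq hq').not_ge ha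
  rcases le_total a 0 with ha | ha
  · rw [hp0 ha, max_eq_right ha, max_eq_left (neg_nonneg.mpr ha)]
    rw [hp0 ha] at h
    exact ⟨by ring, by linear_combination -h⟩
  · rw [hq0 ha, max_eq_left ha, max_eq_right (neg_nonpos.mpr ha)]
    rw [hq0 ha] at h
    exact ⟨by linear_combination h, by ring⟩

/-- For a pointed polyhedron `P = {x : Ax = b, Bx ≤ d}` and a circuit `g`
of `P`, the vector `(g, y⁺, y⁻)` with `y⁺ = max(Bg, 0)`, `y⁻ = max(-Bg, 0)` is an
extreme ray of the cone `C = {(x,y⁺,y⁻) : Ax = 0, Bx = y⁺ - y⁻, y⁺,y⁻ ≥ 0}`: every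
nonzero element of `C` whose `(y⁺,y⁻)`-support is contained in that of `(g,y⁺,y⁻)` is
a positive multiple of it. -/
theorem circuit_is_extreme_ray {n mA mB : ℕ}
    (A : Matrix (Fin mA) (Fin n) ℝ) (B : Matrix (Fin mB) (Fin n) ℝ)
    (hpointed : (Matrix.fromRows A B).rank = n)
    (g : Fin n → ℝ) (hg0 : g ≠ 0) (hgA : A.mulVec g = 0)
    (hmin : ¬ ∃ y : Fin n → ℝ, y ≠ 0 ∧ A.mulVec y = 0 ∧
      {j | B.mulVec y j ≠ 0} ⊂ {j | B.mulVec g j ≠ 0})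
    (yp ym : Fin mB → ℝ)
    (hyp : ∀ i, yp i = max (B.mulVec g i) 0)
    (hym : ∀ i, ym i = max (-(B.mulVec g i)) 0) :
    ∀ (x' : Fin n → ℝ) (yp' ym' : Fin mB → ℝ),
      A.mulVec x' = 0 → B.mulVec x' = yp' - ym' →
      (∀ i, 0 ≤ yp' i) → (∀ i, 0 ≤ ym' i) →
      ¬ (x' = 0 ∧ yp' = 0 ∧ ym' = 0) →
      {i | yp' i ≠ 0} ⊆ {i | yp i ≠ 0} → {i | ym' i ≠ 0} ⊆ {i | ym i ≠ 0} →
      ∃ α : ℝ, 0 < α ∧ x' = α • g ∧ yp' = α • yp ∧ ym' = α • ym := by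
  intro x' yp' ym' hAx' hBx' hyp' hym' hne hsp hsm
  have hpos : ∀ i, yp' i ≠ 0 → 0 < (B *ᵥ g) i := fun i h => by
    have : yp i ≠ 0 := hsp h
    rw [hyp i] at this
    contrapose! this
    exact max_eq_right this
  have hneg : ∀ i, ym' i ≠ 0 → (B *ᵥ g) i < 0 := fun i h => by
    have : ym i ≠ 0 := hsm h
    rw [hym i] at this
    contrapose! this
    exact max_eq_right (neg_nonpos.mpr this)
  have hsupp : support (B *ᵥ x') ⊆ support (B *ᵥ g) := by
    rw [hBx']
    exact (support_sub _ _).trans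
      (Set.union_subset (fun i h => (hpos i h).ne') (fun i h => (hneg i h).ne))
  obtain ⟨i₀, hi₀⟩ := ne_iff.mp <|
    mulVec_ne_zero_of_rank_fromRows_s6 (hpointed.trans (Fintype.card_fin n).symm) hg0 hgA
  set α := (B *ᵥ x') i₀ / (B *ᵥ g) i₀
  have hx' : x' = α • g := eq_smul_of_support_mulVec_subset hmin hgA hAx' hsupp hi₀
  have hparts : ∀ i, yp' i = α * yp i ∧ ym' i = α * ym i := fun i => by
    rw [hyp i, hym i]
    refine eq_mul_max_zero_of_sub_eq_mul (hpos i) (hneg i) ?_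
    rw [← Pi.sub_apply, ← hBx', hx', mulVec_smul, Pi.smul_apply, smul_eq_mul]
  have hα : 0 < α := by
    have hα0 : α ≠ 0 := fun h => hne ⟨by rw [hx', h, zero_smul],
      funext fun i => by simp [(hparts i).1, h], funext fun i => by simp [(hparts i).2, h]⟩
    have hsum : yp' i₀ + ym' i₀ = α * |(B *ᵥ g) i₀| := by
      rw [(hparts i₀).1, (hparts i₀).2, ← mul_add, hyp, hym,
        max_zero_add_max_neg_zero_eq_abs_self]
    exact (nonneg_of_mul_nonneg_left (hsum ▸ add_nonneg (hyp' i₀) (hym' i₀))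
      (abs_pos.mpr hi₀)).lt_of_ne' hα0
  exact ⟨α, hα, hx', funext fun i => (hparts i).1, funext fun i => (hparts i).2⟩
end

section
/- Let C = {(x, y⁺, y⁻) ∈ ℝ^{n+2m} : Ax = 0, Bx = y⁺ − y⁻, y⁺, y⁻ ≥ 0} with rank(A;B) = n. Every extreme ray (x, y⁺, y⁻) of C satisfies either (i) x = 0 and (y⁺, y⁻) is a positive multiple of (e_i, e_i) for some i, or (ii) x is a circuit direction of {x : Ax = b, Bx ≤ d} with y⁺_i = max{(Bx)_i, 0} and y⁻_i = max{−(Bx)_i, 0}. -/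
/-!
Everything comes from testing extremality against well-chosen points of `C`. The points
`(0, eᵢ, eᵢ)` show that `y⁺` and `y⁻` have disjoint supports when `x ≠ 0`, so that they are the
positive and negative parts of `Bx`, and that `(y⁺, y⁻)` is a multiple of `(eᵢ, eᵢ)` when `x = 0`.
If some `y ≠ 0` in `ker A` had `By` supported strictly inside the support of `Bx`, then for small
`ε > 0` the vector `Bx + εBy` has the same sign pattern as `Bx`, so `x + εy` lifts to a point of `C`
with no new nonzero coordinates. Extremality makes it a multiple of `x`, and a coordinate where
`By` vanishes but `Bx` does not forces the multiple to be `1`, i.e. `y = 0`.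
-/

open Filter Topology Matrix

theorem posPart_sub_eq_and_negPart_sub_eq {α : Type*} [AddCommGroup α] [LinearOrder α]
    [IsOrderedAddMonoid α] {a b : α} (ha : 0 ≤ a) (hb : 0 ≤ b) (hab : a = 0 ∨ b = 0) :
    (a - b)⁺ = a ∧ (a - b)⁻ = b := by
  rcases hab with rfl | rfl <;> simp [ha, hb]

theorem exists_pos_sign_add_smul_eq {ι : Type*} [Finite ι] {u v : ι → ℝ}
    (hvu : Function.support v ⊆ Function.support u) :
    ∃ ε : ℝ, 0 < ε ∧ ∀ i, SignType.sign ((u + ε • v) i) = SignType.sign (u i) := by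
  have hsign : ∀ᶠ t in 𝓝 (0 : ℝ), ∀ i, SignType.sign (u i + t * v i) = SignType.sign (u i) := by
    refine eventually_all.mpr fun i => ?_
    by_cases hu : u i = 0
    · have hv : v i = 0 := by_contra fun hv => hvu hv hu
      simp [hu, hv]
    have hlim : Tendsto (fun t : ℝ => u i + t * v i) (𝓝 0) (𝓝 (u i)) := by
      simpa using (show Continuous fun t : ℝ => u i + t * v i by fun_prop).tendsto 0
    rcases lt_or_gt_of_ne hu with hneg | hpos
    · exact (hlim.eventually (eventually_lt_nhds hneg)).mono fun t ht => by
        rw [sign_neg ht, sign_neg hneg]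
    · exact (hlim.eventually (eventually_gt_nhds hpos)).mono fun t ht => by
        rw [sign_pos ht, sign_pos hpos]
  obtain ⟨ε, hε, hpos⟩ :=
    ((eventually_nhdsWithin_of_eventually_nhds hsign).and self_mem_nhdsWithin).exists
      (f := 𝓝[>] (0 : ℝ))
  exact ⟨ε, hpos, hε⟩

section ZeroSetExtreme

variable {m k n : Type*} [Fintype n]

/-- `(x, y⁺, y⁻)` spans an extreme ray of the cone
`C = {(x, y⁺, y⁻) : A x = 0, B x = y⁺ - y⁻, y⁺ ≥ 0, y⁻ ≥ 0}`, in the zero-set characterization. -/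
def IsZeroSetExtreme (A : Matrix m n ℝ) (B : Matrix k n ℝ) (x : n → ℝ) (yp ym : k → ℝ) : Prop :=
  ∀ (x' : n → ℝ) (yp' ym' : k → ℝ), A *ᵥ x' = 0 → B *ᵥ x' = yp' - ym' →
    (∀ i, 0 ≤ yp' i) → (∀ i, 0 ≤ ym' i) → ¬ (x' = 0 ∧ yp' = 0 ∧ ym' = 0) →
    {i | yp' i ≠ 0} ⊆ {i | yp i ≠ 0} → {i | ym' i ≠ 0} ⊆ {i | ym i ≠ 0} →
    ∃ α : ℝ, 0 < α ∧ x' = α • x ∧ yp' = α • yp ∧ ym' = α • ym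

namespace IsZeroSetExtreme

variable {A : Matrix m n ℝ} {B : Matrix k n ℝ} {x : n → ℝ} {yp ym : k → ℝ}

theorem exists_smul_eq_single [DecidableEq k] (h : IsZeroSetExtreme A B x yp ym) {i : k}
    (hp : yp i ≠ 0) (hm : ym i ≠ 0) :
    ∃ α : ℝ, 0 < α ∧ α • x = 0 ∧ α • yp = Pi.single i 1 ∧ α • ym = Pi.single i 1 := by
  have hsupp : ∀ y : k → ℝ, y i ≠ 0 → {j | (Pi.single i 1 : k → ℝ) j ≠ 0} ⊆ {j | y j ≠ 0} := by
    intro y hy j hj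
    obtain rfl : j = i := by by_contra hji; simp [Pi.single_apply, hji] at hj
    exact hy
  have hnonneg : ∀ j, 0 ≤ (Pi.single i 1 : k → ℝ) j := fun j => by
    by_cases hji : j = i <;> simp [hji]
  obtain ⟨α, hα, h0, hyp, hym⟩ := h 0 (Pi.single i 1) (Pi.single i 1) (mulVec_zero A)
    (by rw [mulVec_zero, sub_self]) hnonneg hnonneg
    (fun ⟨_, h1, _⟩ => by simpa using congrFun h1 i) (hsupp yp hp) (hsupp ym hm)
  exact ⟨α, hα, h0.symm, hyp.symm, hym.symm⟩

theorem eq_zero_or_eq_zero (h : IsZeroSetExtreme A B x yp ym) (hx : x ≠ 0) (i : k) :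
    yp i = 0 ∨ ym i = 0 := by
  classical
  by_contra! hne
  obtain ⟨α, hα, hαx, -, -⟩ := h.exists_smul_eq_single hne.1 hne.2
  exact hx ((smul_eq_zero.mp hαx).resolve_left hα.ne')

theorem exists_eq_single_of_eq_zero [DecidableEq k] (h : IsZeroSetExtreme A B x yp ym)
    (hBx : B *ᵥ x = yp - ym) (hnz : ¬ (x = 0 ∧ yp = 0 ∧ ym = 0)) (hx : x = 0) :
    ∃ (i : k) (c : ℝ), 0 < c ∧ yp = Pi.single i c ∧ ym = yp := by
  subst hx
  have hym : ym = yp := (sub_eq_zero.mp (by rw [← hBx, mulVec_zero])).symm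
  subst hym
  obtain ⟨i, hi⟩ := Function.ne_iff.mp fun hzero => hnz ⟨rfl, hzero, hzero⟩
  obtain ⟨α, hα, -, hαy, -⟩ := h.exists_smul_eq_single hi hi
  refine ⟨i, α⁻¹, inv_pos.mpr hα, ?_, rfl⟩
  rw [(eq_inv_smul_iff₀ hα.ne').mpr hαy, ← Pi.single_smul, smul_eq_mul, mul_one]

theorem not_exists_mulVec_support_ssubset [Finite k] (h : IsZeroSetExtreme A B x yp ym)
    (hxA : A *ᵥ x = 0) (hBx : B *ᵥ x = yp - ym) (hyp : ∀ i, 0 ≤ yp i) (hym : ∀ i, 0 ≤ ym i) :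
    ¬ ∃ y : n → ℝ, y ≠ 0 ∧ A *ᵥ y = 0 ∧ {j | (B *ᵥ y) j ≠ 0} ⊂ {j | (B *ᵥ x) j ≠ 0} := by
  rintro ⟨y, hy, hAy, hsub, hnsub⟩
  obtain ⟨j, hjx, hjy⟩ := Set.not_subset.mp hnsub
  replace hjy : (B *ᵥ y) j = 0 := by simpa using hjy
  obtain ⟨ε, hε, hsign⟩ := exists_pos_sign_add_smul_eq hsub
  set x' := x + ε • y
  have hBx' : B *ᵥ x' = B *ᵥ x + ε • B *ᵥ y := by rw [mulVec_add, mulVec_smul]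
  rw [← hBx'] at hsign
  have hj : (B *ᵥ x') j = (B *ᵥ x) j := by
    rw [hBx', Pi.add_apply, Pi.smul_apply, hjy, smul_zero, add_zero]
  have hcoord (i : k) : (B *ᵥ x) i = yp i - ym i := congrFun hBx i
  obtain ⟨α, -, hα, -, -⟩ := h x' (B *ᵥ x')⁺ (B *ᵥ x')⁻
    (by rw [mulVec_add, mulVec_smul, hxA, hAy, smul_zero, add_zero])
    (posPart_sub_negPart _).symm (fun _ => posPart_nonneg _) (fun _ => negPart_nonneg _)
    (fun ⟨h0, _⟩ => hjx (by rw [← hj, h0, mulVec_zero]; rfl))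
    (fun i hi => by
      have hpos : 0 < (B *ᵥ x') i := posPart_pos_iff.mp ((posPart_nonneg _).lt_of_ne' hi)
      rw [← sign_eq_one_iff, hsign i, sign_eq_one_iff, hcoord] at hpos
      exact (by linarith [hym i] : 0 < yp i).ne')
    (fun i hi => by
      have hneg : (B *ᵥ x') i < 0 := negPart_pos_iff.mp ((negPart_nonneg _).lt_of_ne' hi)
      rw [← sign_eq_neg_one_iff, hsign i, sign_eq_neg_one_iff, hcoord] at hneg
      exact (by linarith [hyp i] : 0 < ym i).ne')
  have hα1 : α = 1 := by
    have hαj := congrFun (congrArg (B *ᵥ ·) hα) j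
    simp only [mulVec_smul, Pi.smul_apply, smul_eq_mul, hj] at hαj
    exact (mul_eq_right₀ hjx).mp hαj.symm
  rw [hα1, one_smul, add_eq_left, smul_eq_zero] at hα
  exact hy (hα.resolve_left hε.ne')

end IsZeroSetExtreme

end ZeroSetExtreme

theorem extreme_ray_classification_general {n mA mB : ℕ}
    (A : Matrix (Fin mA) (Fin n) ℝ) (B : Matrix (Fin mB) (Fin n) ℝ)
    (x : Fin n → ℝ) (yp ym : Fin mB → ℝ)
    (hxA : A.mulVec x = 0) (hBx : B.mulVec x = yp - ym)
    (hyp : ∀ i, 0 ≤ yp i) (hym : ∀ i, 0 ≤ ym i)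
    (hnz : ¬ (x = 0 ∧ yp = 0 ∧ ym = 0))
    (hext : ∀ (x' : Fin n → ℝ) (yp' ym' : Fin mB → ℝ),
      A.mulVec x' = 0 → B.mulVec x' = yp' - ym' →
      (∀ i, 0 ≤ yp' i) → (∀ i, 0 ≤ ym' i) →
      ¬ (x' = 0 ∧ yp' = 0 ∧ ym' = 0) →
      {i | yp' i ≠ 0} ⊆ {i | yp i ≠ 0} → {i | ym' i ≠ 0} ⊆ {i | ym i ≠ 0} →
      ∃ α : ℝ, 0 < α ∧ x' = α • x ∧ yp' = α • yp ∧ ym' = α • ym) :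
    (x = 0 ∧ ∃ (i : Fin mB) (c : ℝ), 0 < c ∧
        yp = (fun j => if j = i then c else 0) ∧ ym = yp) ∨
    (x ≠ 0 ∧
      (¬ ∃ y : Fin n → ℝ, y ≠ 0 ∧ A.mulVec y = 0 ∧
        {j | B.mulVec y j ≠ 0} ⊂ {j | B.mulVec x j ≠ 0}) ∧
      (∀ i, yp i = max (B.mulVec x i) 0) ∧ (∀ i, ym i = max (-(B.mulVec x i)) 0)) := by
  have hextreme : IsZeroSetExtreme A B x yp ym := hext
  by_cases hx : x = 0
  · obtain ⟨i, c, hc, rfl, rfl⟩ := hextreme.exists_eq_single_of_eq_zero hBx hnz hx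
    exact .inl ⟨hx, i, c, hc, funext fun j => Pi.single_apply i c j, rfl⟩
  · have hparts (i : Fin mB) : ((B *ᵥ x) i)⁺ = yp i ∧ ((B *ᵥ x) i)⁻ = ym i := by
      rw [hBx, Pi.sub_apply]
      exact posPart_sub_eq_and_negPart_sub_eq (hyp i) (hym i) (hextreme.eq_zero_or_eq_zero hx i)
    exact .inr ⟨hx, hextreme.not_exists_mulVec_support_ssubset hxA hBx hyp hym,
      fun i => (hparts i).1.symm, fun i => (hparts i).2.symm⟩

/-- Every extreme ray `(x, y⁺, y⁻)` of the cone
`C = {(x,y⁺,y⁻) : Ax = 0, Bx = y⁺ - y⁻, y⁺,y⁻ ≥ 0}` (with `rank (A;B) = n`) satisfies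
either (i) `x = 0` and `(y⁺, y⁻)` is a positive multiple of `(e_i, e_i)` for some `i`,
or (ii) `x` is a circuit direction of `{x : Ax = b, Bx ≤ d}` with
`y⁺ = max(Bx,0)`, `y⁻ = max(-Bx,0)`. -/
theorem extreme_ray_classification {n mA mB : ℕ}
    (A : Matrix (Fin mA) (Fin n) ℝ) (B : Matrix (Fin mB) (Fin n) ℝ)
    (hpointed : (Matrix.fromRows A B).rank = n)
    (x : Fin n → ℝ) (yp ym : Fin mB → ℝ)
    (hxA : A.mulVec x = 0) (hBx : B.mulVec x = yp - ym)
    (hyp : ∀ i, 0 ≤ yp i) (hym : ∀ i, 0 ≤ ym i)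
    (hnz : ¬ (x = 0 ∧ yp = 0 ∧ ym = 0))
    (hext : ∀ (x' : Fin n → ℝ) (yp' ym' : Fin mB → ℝ),
      A.mulVec x' = 0 → B.mulVec x' = yp' - ym' →
      (∀ i, 0 ≤ yp' i) → (∀ i, 0 ≤ ym' i) →
      ¬ (x' = 0 ∧ yp' = 0 ∧ ym' = 0) →
      {i | yp' i ≠ 0} ⊆ {i | yp i ≠ 0} → {i | ym' i ≠ 0} ⊆ {i | ym i ≠ 0} →
      ∃ α : ℝ, 0 < α ∧ x' = α • x ∧ yp' = α • yp ∧ ym' = α • ym) :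
    (x = 0 ∧ ∃ (i : Fin mB) (c : ℝ), 0 < c ∧
        yp = (fun j => if j = i then c else 0) ∧ ym = yp) ∨
    (x ≠ 0 ∧
      (¬ ∃ y : Fin n → ℝ, y ≠ 0 ∧ A.mulVec y = 0 ∧
        {j | B.mulVec y j ≠ 0} ⊂ {j | B.mulVec x j ≠ 0}) ∧
      (∀ i, yp i = max (B.mulVec x i) 0) ∧ (∀ i, ym i = max (-(B.mulVec x i)) 0)) :=
  extreme_ray_classification_general A B x yp ym hxA hBx hyp hym hnz hext
end

section
/- Let C = {(x, y⁺, y⁻) : Ax = 0, Bx = y⁺ − y⁻, y⁺, y⁻ ≥ 0} be pointed, and suppose (x, y⁺, y⁻) is an extreme ray of C with y⁺_i > 0 and y⁻_i > 0 for some index i. Then x = 0 and y⁺ − y⁻ = 0. -/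
theorem extreme_ray_with_double_support_general {n mA mB : ℕ}
    (A : Matrix (Fin mA) (Fin n) ℝ) (B : Matrix (Fin mB) (Fin n) ℝ)
    (x : Fin n → ℝ) (yp ym : Fin mB → ℝ)
    (hext : ∀ (x' : Fin n → ℝ) (yp' ym' : Fin mB → ℝ),
      A.mulVec x' = 0 → B.mulVec x' = yp' - ym' →
      (∀ i, 0 ≤ yp' i) → (∀ i, 0 ≤ ym' i) →
      ¬ (x' = 0 ∧ yp' = 0 ∧ ym' = 0) →
      {i | yp' i ≠ 0} ⊆ {i | yp i ≠ 0} → {i | ym' i ≠ 0} ⊆ {i | ym i ≠ 0} →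
      ∃ α : ℝ, 0 < α ∧ x' = α • x ∧ yp' = α • yp ∧ ym' = α • ym)
    (i : Fin mB) (hpos : 0 < yp i ∧ 0 < ym i) :
    x = 0 ∧ yp = ym := by
  -- `(0, eᵢ, eᵢ)` lies in `C` and in the face of `(x, y⁺, y⁻)`, so it is a positive multiple of it.
  set e : Fin mB → ℝ := Pi.single i 1
  have he_nonneg : 0 ≤ e := Pi.single_nonneg.2 zero_le_one
  have he_ne_zero : e ≠ 0 := Pi.single_ne_zero_iff.2 one_ne_zero
  have he_support {y : Fin mB → ℝ} (hy : y i ≠ 0) : Function.support e ⊆ Function.support y :=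
    Pi.support_single_subset.trans (Set.singleton_subset_iff.2 hy)
  obtain ⟨α, hα, hx, he_yp, he_ym⟩ := hext 0 e e (Matrix.mulVec_zero A)
    (by rw [Matrix.mulVec_zero, sub_self]) he_nonneg he_nonneg (fun h => he_ne_zero h.2.1)
    (he_support hpos.1.ne') (he_support hpos.2.ne')
  exact ⟨(smul_eq_zero.1 hx.symm).resolve_left hα.ne',
    smul_right_injective _ hα.ne' (he_yp.symm.trans he_ym)⟩

/-- If `(x, y⁺, y⁻)` is an extreme ray of the pointed cone
`C = {(x,y⁺,y⁻) : Ax = 0, Bx = y⁺ - y⁻, y⁺,y⁻ ≥ 0}` with `y⁺_i > 0` and `y⁻_i > 0`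
for some index `i`, then `x = 0` and `y⁺ - y⁻ = 0`. -/
theorem extreme_ray_with_double_support {n mA mB : ℕ}
    (A : Matrix (Fin mA) (Fin n) ℝ) (B : Matrix (Fin mB) (Fin n) ℝ)
    (hpointed : (Matrix.fromRows A B).rank = n)
    (x : Fin n → ℝ) (yp ym : Fin mB → ℝ)
    (hxA : A.mulVec x = 0) (hBx : B.mulVec x = yp - ym)
    (hyp : ∀ i, 0 ≤ yp i) (hym : ∀ i, 0 ≤ ym i)
    (hnz : ¬ (x = 0 ∧ yp = 0 ∧ ym = 0))
    (hext : ∀ (x' : Fin n → ℝ) (yp' ym' : Fin mB → ℝ),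
      A.mulVec x' = 0 → B.mulVec x' = yp' - ym' →
      (∀ i, 0 ≤ yp' i) → (∀ i, 0 ≤ ym' i) →
      ¬ (x' = 0 ∧ yp' = 0 ∧ ym' = 0) →
      {i | yp' i ≠ 0} ⊆ {i | yp i ≠ 0} → {i | ym' i ≠ 0} ⊆ {i | ym i ≠ 0} →
      ∃ α : ℝ, 0 < α ∧ x' = α • x ∧ yp' = α • yp ∧ ym' = α • ym)
    (i : Fin mB) (hpos : 0 < yp i ∧ 0 < ym i) :
    x = 0 ∧ yp = ym :=
  extreme_ray_with_double_support_general A B x yp ym hext i hpos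
end

section
/- Let u ∈ ker(A) \ {0}. Then u can be written as u = Σ_{i=1}^t λ_i g_i with t ≤ n − rank(A), λ_i > 0, each g_i a circuit of P = {x : Ax = b, Bx ≤ d}, and each Bg_i sign-compatible with Bu (i.e., (Bg_i)_j (Bu)_j ≥ 0 for all j). -/
/-!
For `p q : ι → K` with `support q ⊆ support p` that agree in sign at some coordinate, moving
from `p` along `-q` by the smallest ratio `p j / q j` over those coordinates keeps the sign
pattern of `p` and kills at least one more coordinate. Inside `ker A`, with `p = B g`, this shows
that a vector whose `B`-image has inclusion-minimal support among those conforming to `B u` is a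
circuit. With `p = B u` and `q = B g` for such a circuit `g`, it splits off a positive multiple
of `g`, leaving a remainder that still conforms to `B u` and has smaller `B`-support; well-founded
induction on that support gives the conformal sum. Pointedness, i.e. `ker A ∩ ker B = 0`, is what
makes `B g ≠ 0` for nonzero `g ∈ ker A`. Each circuit split off is nonzero at a coordinate where
all later ones vanish, so the circuits are linearly independent in `ker A`, whence
`t ≤ n - rank A`.
-/

open Function Matrix

section LinearAlgebra

variable {K l m n : Type*} [Field K] [Fintype n]

theorem Matrix.rank_add_finrank_ker_mulVecLin (A : Matrix l n K) :
    A.rank + Module.finrank K (LinearMap.ker A.mulVecLin) = Fintype.card n := by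
  rw [rank, LinearMap.finrank_range_add_finrank_ker, Module.finrank_fintype_fun_eq_card]

theorem Matrix.eq_zero_of_rank_fromRows_eq_card {A : Matrix l n K} {B : Matrix m n K}
    (h : (fromRows A B).rank = Fintype.card n) {x : n → K} (hA : A *ᵥ x = 0)
    (hB : B *ᵥ x = 0) : x = 0 := by
  have hker : LinearMap.ker (fromRows A B).mulVecLin = ⊥ :=
    Submodule.finrank_eq_zero.1 (by have := rank_add_finrank_ker_mulVecLin (fromRows A B); omega)
  have hx : x ∈ LinearMap.ker (fromRows A B).mulVecLin := by
    simp [fromRows_mulVec, hA, hB]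
  simpa [hker] using hx

theorem Matrix.card_le_card_sub_rank_of_linearIndependent (A : Matrix l n K) {t : ℕ}
    {g : Fin t → n → K} (hg : LinearIndependent K g) (hgA : ∀ i, A *ᵥ g i = 0) :
    t ≤ Fintype.card n - A.rank := by
  have hspan : Submodule.span K (Set.range g) ≤ LinearMap.ker A.mulVecLin :=
    Submodule.span_le.2 (Set.range_subset_iff.2 hgA)
  have := Submodule.finrank_mono hspan
  rw [finrank_span_eq_card hg, Fintype.card_fin] at this
  have := rank_add_finrank_ker_mulVecLin A
  omega

end LinearAlgebra

section Conformal

variable {ι K : Type*} [Field K] [LinearOrder K]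

/-- `v` conforms to `w`: sign-compatible with `w`, and with support inside that of `w`. -/
def ConformsTo (v w : ι → K) : Prop := ∀ j, v j ≠ 0 → 0 < v j * w j

namespace ConformsTo

variable {u v w : ι → K}

theorem refl [IsStrictOrderedRing K] (v : ι → K) : ConformsTo v v :=
  fun _ hj => mul_self_pos.2 hj

theorem support_subset (h : ConformsTo v w) : support v ⊆ support w :=
  fun _ hj => right_ne_zero_of_mul (h _ hj).ne'

theorem mul_nonneg (h : ConformsTo v w) (j : ι) : 0 ≤ v j * w j := by
  by_cases hj : v j = 0
  · simp [hj]
  · exact (h j hj).le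

theorem trans [IsStrictOrderedRing K] (huv : ConformsTo u v) (hvw : ConformsTo v w) :
    ConformsTo u w := by
  intro j hj
  have hv : v j ≠ 0 := huv.support_subset hj
  have : 0 < u j * w j * (v j * v j) := by
    rw [show u j * w j * (v j * v j) = u j * v j * (v j * w j) by ring]
    exact mul_pos (huv j hj) (hvw j hv)
  exact pos_of_mul_pos_left this (mul_self_nonneg _)

end ConformsTo

theorem conformsTo_iff {v w : ι → K} :
    ConformsTo v w ↔ (∀ j, 0 ≤ v j * w j) ∧ support v ⊆ support w :=
  ⟨fun h => ⟨h.mul_nonneg, h.support_subset⟩, fun ⟨hnn, hsub⟩ j hj =>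
    (hnn j).lt_of_ne' (mul_ne_zero hj (hsub hj))⟩

theorem exists_sub_smul_conformsTo [IsStrictOrderedRing K] [Finite ι] {p q : ι → K}
    (hqp : support q ⊆ support p) (hpq : ∃ j, 0 < p j * q j) :
    ∃ t : K, 0 < t ∧ ConformsTo (p - t • q) p ∧ support (p - t • q) ⊂ support p := by
  obtain ⟨j₀, hj₀, hmin⟩ := Set.exists_min_image {j | 0 < p j * q j} (fun j => p j / q j)
    (Set.toFinite _) hpq
  have hq₀ : q j₀ ≠ 0 := right_ne_zero_of_mul hj₀.ne'
  have ht : 0 < p j₀ / q j₀ := by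
    rw [show p j₀ / q j₀ = p j₀ * q j₀ / (q j₀ * q j₀) by field_simp]
    exact div_pos hj₀ (mul_self_pos.2 hq₀)
  have hsub : support (p - (p j₀ / q j₀) • q) ⊆ support p :=
    (support_sub _ _).trans (Set.union_subset le_rfl ((support_const_smul_subset _ _).trans hqp))
  refine ⟨p j₀ / q j₀, ht, conformsTo_iff.2 ⟨fun j => ?_, hsub⟩,
    (Set.ssubset_iff_of_subset hsub).2 ⟨j₀, left_ne_zero_of_mul hj₀.ne', ?_⟩⟩
  · simp only [Pi.sub_apply, Pi.smul_apply, smul_eq_mul]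
    rcases lt_or_ge 0 (p j * q j) with hj | hj
    · have hq : q j ≠ 0 := right_ne_zero_of_mul hj.ne'
      calc (0 : K) ≤ p j * q j * (p j / q j - p j₀ / q j₀) :=
            mul_nonneg hj.le (sub_nonneg.2 (hmin j hj))
        _ = (p j - p j₀ / q j₀ * q j) * p j := by field_simp
    · nlinarith [mul_self_nonneg (p j)]
  · simp [div_mul_cancel₀ _ hq₀]

end Conformal

namespace Matrix

variable {K l m n : Type*} [Field K] [LinearOrder K] [Fintype n]

def IsCircuit (A : Matrix l n K) (B : Matrix m n K) (g : n → K) : Prop :=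
  g ≠ 0 ∧ A *ᵥ g = 0 ∧ ¬ ∃ y, y ≠ 0 ∧ A *ᵥ y = 0 ∧ support (B *ᵥ y) ⊂ support (B *ᵥ g)

variable [IsStrictOrderedRing K] [Finite m] {A : Matrix l n K} {B : Matrix m n K}

theorem exists_isCircuit_conformsTo (hAB : ∀ x, A *ᵥ x = 0 → B *ᵥ x = 0 → x = 0) {u : n → K}
    (hu0 : u ≠ 0) (huA : A *ᵥ u = 0) :
    ∃ g, IsCircuit A B g ∧ ConformsTo (B *ᵥ g) (B *ᵥ u) := by
  obtain ⟨g, ⟨hg0, hgA, hgu⟩, hmin⟩ :=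
    (InvImage.wf (fun x => support (B *ᵥ x)) wellFounded_lt).has_min
      {x | x ≠ 0 ∧ A *ᵥ x = 0 ∧ ConformsTo (B *ᵥ x) (B *ᵥ u)} ⟨u, hu0, huA, .refl _⟩
  refine ⟨g, ⟨hg0, hgA, ?_⟩, hgu⟩
  rintro ⟨y, hy0, hyA, hyg⟩
  obtain ⟨j, hj⟩ : ∃ j, (B *ᵥ y) j ≠ 0 := by
    by_contra! h
    exact hy0 (hAB y hyA (funext h))
  obtain ⟨z, hzA, hzy, hgz⟩ : ∃ z, A *ᵥ z = 0 ∧ support (B *ᵥ z) = support (B *ᵥ y) ∧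
      ∃ j, 0 < (B *ᵥ g) j * (B *ᵥ z) j := by
    rcases (mul_ne_zero (hyg.subset hj) hj).lt_or_gt with h | h
    · exact ⟨-y, by rw [mulVec_neg, hyA, neg_zero], by rw [mulVec_neg, support_neg], j,
        by simpa [mulVec_neg] using h⟩
    · exact ⟨y, hyA, rfl, j, h⟩
  obtain ⟨t, ht, hconf, hss⟩ := exists_sub_smul_conformsTo (hzy ▸ hyg.subset) hgz
  rw [← mulVec_smul, ← mulVec_sub] at hconf hss
  refine hmin (g - t • z) ⟨fun hw => ?_, by simp [mulVec_sub, mulVec_smul, hgA, hzA],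
    hconf.trans hgu⟩ hss
  rw [sub_eq_zero.1 hw, mulVec_smul, support_const_smul_of_ne_zero _ _ ht.ne', hzy] at hyg
  exact hyg.ne rfl

theorem exists_linearIndependent_isCircuit_sum (hAB : ∀ x, A *ᵥ x = 0 → B *ᵥ x = 0 → x = 0)
    (u : n → K) (huA : A *ᵥ u = 0) :
    ∃ (t : ℕ) (g : Fin t → n → K) (c : Fin t → K), LinearIndependent K g ∧ (∀ i, 0 < c i) ∧
      (∀ i, IsCircuit A B (g i)) ∧ (∀ i, ConformsTo (B *ᵥ g i) (B *ᵥ u)) ∧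
      u = ∑ i, c i • g i := by
  induction u using (InvImage.wf (fun x => support (B *ᵥ x)) wellFounded_lt).induction with
  | _ u ih =>
  by_cases hu0 : u = 0
  · exact ⟨0, Fin.elim0, Fin.elim0, linearIndependent_empty_type, nofun, nofun, nofun,
      by simp [hu0]⟩
  obtain ⟨g, hg, hgu⟩ := exists_isCircuit_conformsTo hAB hu0 huA
  obtain ⟨j, hj⟩ : ∃ j, (B *ᵥ g) j ≠ 0 := by
    by_contra! h
    exact hg.1 (hAB g hg.2.1 (funext h))
  obtain ⟨c, hc, hconf, hss⟩ :=
    exists_sub_smul_conformsTo hgu.support_subset ⟨j, mul_comm ((B *ᵥ g) j) _ ▸ hgu j hj⟩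
  rw [← mulVec_smul, ← mulVec_sub] at hconf hss
  obtain ⟨t, g', c', hli, hc', hcirc, hconf', hsum⟩ :=
    ih (u - c • g) hss (by simp [mulVec_sub, mulVec_smul, huA, hg.2.1])
  obtain ⟨j₀, hj₀u, hj₀⟩ := Set.exists_of_ssubset hss
  have hgj₀ : (B *ᵥ g) j₀ ≠ 0 := by
    intro h
    exact hj₀ (by simpa [mulVec_sub, mulVec_smul, h] using hj₀u)
  have hg_notMem : g ∉ Submodule.span K (Set.range g') := by
    let φ := (LinearMap.proj j₀).comp B.mulVecLin
    have hφ : Submodule.span K (Set.range g') ≤ LinearMap.ker φ :=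
      Submodule.span_le.2 <| Set.range_subset_iff.2 fun i =>
        not_not.1 fun h => hj₀ ((hconf' i).support_subset h)
    exact fun hmem => hgj₀ (hφ hmem)
  refine ⟨t + 1, Fin.cons g g', Fin.cons c c', hli.finCons hg_notMem,
    Fin.forall_fin_succ.2 ⟨hc, hc'⟩, Fin.forall_fin_succ.2 ⟨hg, hcirc⟩,
    Fin.forall_fin_succ.2 ⟨hgu, fun i => (hconf' i).trans hconf⟩, ?_⟩
  simp only [Fin.sum_univ_succ, Fin.cons_zero, Fin.cons_succ, ← hsum, add_sub_cancel]

end Matrix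

theorem conformal_sum_general {n mA mB : ℕ}
    (A : Matrix (Fin mA) (Fin n) ℝ) (B : Matrix (Fin mB) (Fin n) ℝ)
    (hpointed : (Matrix.fromRows A B).rank = n)
    (u : Fin n → ℝ) (huA : A.mulVec u = 0) :
    ∃ t : ℕ, t ≤ n - A.rank ∧
      ∃ (g : Fin t → Fin n → ℝ) (lam : Fin t → ℝ),
        (∀ i, 0 < lam i) ∧
        (∀ i, g i ≠ 0 ∧ A.mulVec (g i) = 0 ∧
          ¬ ∃ y : Fin n → ℝ, y ≠ 0 ∧ A.mulVec y = 0 ∧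
            {j | B.mulVec y j ≠ 0} ⊂ {j | B.mulVec (g i) j ≠ 0}) ∧
        (∀ i j, 0 ≤ B.mulVec (g i) j * B.mulVec u j) ∧
        u = ∑ i, lam i • g i := by
  have hAB (x : Fin n → ℝ) : A *ᵥ x = 0 → B *ᵥ x = 0 → x = 0 :=
    eq_zero_of_rank_fromRows_eq_card (by rwa [Fintype.card_fin])
  obtain ⟨t, g, c, hli, hc, hcirc, hconf, hsum⟩ :=
    exists_linearIndependent_isCircuit_sum hAB u huA
  refine ⟨t, ?_, g, c, hc, hcirc, fun i => (hconf i).mul_nonneg, hsum⟩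
  simpa using card_le_card_sub_rank_of_linearIndependent A hli fun i => (hcirc i).2.1

/-- Conformal sum property. Any `u ∈ ker A \ {0}` can be written as
`u = Σ_{i=1}^t λ_i g_i` with `t ≤ n - rank A`, `λ_i > 0`, each `g_i` a circuit
direction of `P = {x : Ax = b, Bx ≤ d}` (nonzero element of `ker A` with `B gᵢ`
support-minimal), and each `B gᵢ` sign-compatible with `B u`. -/
theorem conformal_sum {n mA mB : ℕ}
    (A : Matrix (Fin mA) (Fin n) ℝ) (B : Matrix (Fin mB) (Fin n) ℝ)
    (hpointed : (Matrix.fromRows A B).rank = n)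
    (u : Fin n → ℝ) (hu0 : u ≠ 0) (huA : A.mulVec u = 0) :
    ∃ t : ℕ, t ≤ n - A.rank ∧
      ∃ (g : Fin t → Fin n → ℝ) (lam : Fin t → ℝ),
        (∀ i, 0 < lam i) ∧
        (∀ i, g i ≠ 0 ∧ A.mulVec (g i) = 0 ∧
          ¬ ∃ y : Fin n → ℝ, y ≠ 0 ∧ A.mulVec y = 0 ∧
            {j | B.mulVec y j ≠ 0} ⊂ {j | B.mulVec (g i) j ≠ 0}) ∧
        (∀ i j, 0 ≤ B.mulVec (g i) j * B.mulVec u j) ∧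
        u = ∑ i, lam i • g i :=
  conformal_sum_general A B hpointed u huA
end

section
/- Let g_k, g_{k+1} ∈ ℝ^n with Bg_k ≠ 0, Bg_{k+1} ≠ 0, and α_k, α_{k+1} > 0. If cᵀg_k/‖Bg_k‖₁ > cᵀg_{k+1}/‖Bg_{k+1}‖₁, then cᵀ(α_k g_k + α_{k+1} g_{k+1}) < ‖α_k Bg_k + α_{k+1} Bg_{k+1}‖₁ · (cᵀg_k/‖Bg_k‖₁). -/
/-!
Write `s(g) = f g / p g` for the steepness of a direction `g`, where `f` is linear and `p` a
seminorm. If `s(h) < s(g) ≤ 0`, then `f (a • g + b • h) = a p(g) s(g) + b p(h) s(h)` is strictly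
below `(a p(g) + b p(h)) s(g)`, and since `s(g) ≤ 0` the triangle inequality
`p (a • g + b • h) ≤ a p(g) + b p(h)` only lowers the bound further.
-/

open Matrix

theorem map_smul_add_smul_lt_seminorm_mul_div {E : Type*} [AddCommGroup E] [Module ℝ E]
    (f : E →ₗ[ℝ] ℝ) (p : Seminorm ℝ E) {g h : E} (hg : 0 < p g) (hh : 0 < p h)
    {a b : ℝ} (ha : 0 < a) (hb : 0 < b) (hdescent : f g ≤ 0)
    (hlt : f h / p h < f g / p g) :
    f (a • g + b • h) < p (a • g + b • h) * (f g / p g) := by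
  set s := f g / p g
  have hs : s ≤ 0 := div_nonpos_of_nonpos_of_nonneg hdescent hg.le
  have hfg : f g = p g * s := (mul_div_cancel₀ _ hg.ne').symm
  have hfh : f h < s * p h := (div_lt_iff₀ hh).mp hlt
  have htriangle : p (a • g + b • h) ≤ a * p g + b * p h := by
    calc p (a • g + b • h) ≤ p (a • g) + p (b • h) := map_add_le_add p _ _
      _ = a * p g + b * p h := by
        rw [map_smul_eq_mul, map_smul_eq_mul, Real.norm_of_nonneg ha.le,
          Real.norm_of_nonneg hb.le]
  calc f (a • g + b • h) = a * (p g * s) + b * f h := by simp [hfg]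
    _ < (a * p g + b * p h) * s := by nlinarith
    _ ≤ p (a • g + b • h) * s := mul_le_mul_of_nonpos_right htriangle hs

noncomputable def Matrix.l1MulVecSeminorm {ι κ : Type*} [Fintype ι] [Fintype κ]
    (B : Matrix ι κ ℝ) : Seminorm ℝ (κ → ℝ) :=
  (normSeminorm ℝ (PiLp 1 fun _ : ι => ℝ)).comp
    ((WithLp.linearEquiv 1 ℝ (ι → ℝ)).symm.toLinearMap ∘ₗ B.mulVecLin)

theorem Matrix.l1MulVecSeminorm_apply {ι κ : Type*} [Fintype ι] [Fintype κ]
    (B : Matrix ι κ ℝ) (x : κ → ℝ) : B.l1MulVecSeminorm x = ∑ i, |(B *ᵥ x) i| := by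
  simp [l1MulVecSeminorm, PiLp.norm_eq_of_L1]

theorem Matrix.l1MulVecSeminorm_pos {ι κ : Type*} [Fintype ι] [Fintype κ]
    {B : Matrix ι κ ℝ} {x : κ → ℝ} (hx : B *ᵥ x ≠ 0) : 0 < B.l1MulVecSeminorm x := by
  simpa [l1MulVecSeminorm] using hx

/-- If `cᵀg_k/‖Bg_k‖₁ > cᵀg_{k+1}/‖Bg_{k+1}‖₁` (with `g_k` a descent
direction, i.e. `cᵀg_k ≤ 0`, as in the steepest-descent scheme), then
`cᵀ(α_k g_k + α_{k+1} g_{k+1}) < ‖α_k Bg_k + α_{k+1} Bg_{k+1}‖₁ · (cᵀg_k/‖Bg_k‖₁)`. -/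
theorem steepness_key_inequality {m n : ℕ}
    (B : Matrix (Fin m) (Fin n) ℝ) (c : Fin n → ℝ)
    (gk gk1 : Fin n → ℝ) (hgk : B.mulVec gk ≠ 0) (hgk1 : B.mulVec gk1 ≠ 0)
    (ak ak1 : ℝ) (hak : 0 < ak) (hak1 : 0 < ak1)
    (hdescent : c ⬝ᵥ gk ≤ 0)
    (hlt : c ⬝ᵥ gk1 / (∑ i, |B.mulVec gk1 i|) < c ⬝ᵥ gk / (∑ i, |B.mulVec gk i|)) :
    c ⬝ᵥ (ak • gk + ak1 • gk1) <
      (∑ i, |ak * B.mulVec gk i + ak1 * B.mulVec gk1 i|) *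
        (c ⬝ᵥ gk / (∑ i, |B.mulVec gk i|)) := by
  have key := map_smul_add_smul_lt_seminorm_mul_div (dotProductBilin ℝ ℝ c)
    B.l1MulVecSeminorm (l1MulVecSeminorm_pos hgk) (l1MulVecSeminorm_pos hgk1) hak hak1
    hdescent (by simpa [l1MulVecSeminorm_apply] using hlt)
  simpa [l1MulVecSeminorm_apply, mulVec_add, mulVec_smul] using key
end

section
/- Let g₁, ..., g_j ∈ ℝ^n with each Bg_i ≠ 0 and α_i > 0, and suppose cᵀg_i/‖Bg_i‖₁ = cᵀg₁/‖Bg₁‖₁ for all i. If Bg₁ and Bg_j lie in different closed orthants in the sense that ‖Σ α_i Bg_i‖₁ < Σ α_i ‖Bg_i‖₁, then cᵀ(Σ α_i g_i) / ‖B(Σ α_i g_i)‖₁ < cᵀg₁/‖Bg₁‖₁, provided B(Σ α_i g_i) ≠ 0 and cᵀg₁ < 0. -/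
/-!
On the rays `g i` the objective is proportional to the ℓ¹ norm, `cᵀ gᵢ = r ‖B gᵢ‖₁` with the
common steepness `r < 0`, so `cᵀ(Σ αᵢ gᵢ) = r Σ αᵢ ‖B gᵢ‖₁`. Dividing by the strictly smaller
`‖B(Σ αᵢ gᵢ)‖₁` makes this negative quotient strictly more negative than `r`.
-/

open Matrix

lemma sum_abs_pos_of_ne_zero {ι : Type*} [Fintype ι] {v : ι → ℝ} (hv : v ≠ 0) :
    0 < ∑ l, |v l| := by
  obtain ⟨l, hl⟩ := Function.ne_iff.mp hv
  exact Finset.sum_pos' (fun l _ => abs_nonneg (v l)) ⟨l, Finset.mem_univ l, abs_pos.mpr hl⟩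

lemma mul_div_lt_of_neg_of_lt {r S D : ℝ} (hr : r < 0) (hD : 0 < D) (hDS : D < S) :
    r * S / D < r := by
  rw [div_lt_iff₀ hD]
  nlinarith

lemma dotProduct_sum_smul {ι κ R : Type*} [Fintype κ] [CommSemiring R] (s : Finset ι)
    (c : κ → R) (a : ι → R) (g : ι → κ → R) :
    c ⬝ᵥ (∑ i ∈ s, a i • g i) = ∑ i ∈ s, a i * c ⬝ᵥ g i := by
  simp only [dotProduct_sum, dotProduct_smul, smul_eq_mul]

theorem orthant_change_strict_decrease_general {m n : ℕ}
    (B : Matrix (Fin m) (Fin n) ℝ) (c : Fin n → ℝ)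
    {j : ℕ} (hj : 0 < j)
    (g : Fin j → Fin n → ℝ) (a : Fin j → ℝ)
    (hB : ∀ i, B.mulVec (g i) ≠ 0)
    (heq : ∀ i, c ⬝ᵥ g i / (∑ l, |B.mulVec (g i) l|)
      = c ⬝ᵥ g ⟨0, hj⟩ / (∑ l, |B.mulVec (g ⟨0, hj⟩) l|))
    (hcneg : c ⬝ᵥ g ⟨0, hj⟩ < 0)
    (hlt : (∑ l, |B.mulVec (∑ i, a i • g i) l|) < ∑ i, a i * ∑ l, |B.mulVec (g i) l|)
    (hBsum : B.mulVec (∑ i, a i • g i) ≠ 0) :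
    c ⬝ᵥ (∑ i, a i • g i) / (∑ l, |B.mulVec (∑ i, a i • g i) l|) <
      c ⬝ᵥ g ⟨0, hj⟩ / (∑ l, |B.mulVec (g ⟨0, hj⟩) l|) := by
  set N : Fin j → ℝ := fun i => ∑ l, |B.mulVec (g i) l|
  set r := c ⬝ᵥ g ⟨0, hj⟩ / N ⟨0, hj⟩
  have hN : ∀ i, 0 < N i := fun i => sum_abs_pos_of_ne_zero (hB i)
  have hr : r < 0 := div_neg_of_neg_of_pos hcneg (hN _)
  have hc : ∀ i, c ⬝ᵥ g i = r * N i := fun i => by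
    rw [← heq i, div_mul_cancel₀ _ (hN i).ne']
  have hcsum : c ⬝ᵥ (∑ i, a i • g i) = r * ∑ i, a i * N i := by
    simp only [dotProduct_sum_smul, hc, Finset.mul_sum]
    exact Finset.sum_congr rfl fun i _ => by ring
  rw [hcsum]
  exact mul_div_lt_of_neg_of_lt hr (sum_abs_pos_of_ne_zero hBsum) hlt

/-- Let `g₁, ..., g_j` have equal steepness `cᵀg_i/‖Bg_i‖₁` with
`cᵀg₁ < 0` and `α_i > 0`. If the vectors `α_i Bg_i` do not all lie in a common closed
orthant (expressed by the strict ℓ¹ triangle inequality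
`‖Σ α_i Bg_i‖₁ < Σ α_i ‖Bg_i‖₁`) and `B(Σ α_i g_i) ≠ 0`, then
`cᵀ(Σ α_i g_i)/‖B(Σ α_i g_i)‖₁ < cᵀg₁/‖Bg₁‖₁`. -/
theorem orthant_change_strict_decrease {m n : ℕ}
    (B : Matrix (Fin m) (Fin n) ℝ) (c : Fin n → ℝ)
    {j : ℕ} (hj : 0 < j)
    (g : Fin j → Fin n → ℝ) (a : Fin j → ℝ) (ha : ∀ i, 0 < a i)
    (hB : ∀ i, B.mulVec (g i) ≠ 0)
    (heq : ∀ i, c ⬝ᵥ g i / (∑ l, |B.mulVec (g i) l|)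
      = c ⬝ᵥ g ⟨0, hj⟩ / (∑ l, |B.mulVec (g ⟨0, hj⟩) l|))
    (hcneg : c ⬝ᵥ g ⟨0, hj⟩ < 0)
    (hlt : (∑ l, |B.mulVec (∑ i, a i • g i) l|) < ∑ i, a i * ∑ l, |B.mulVec (g i) l|)
    (hBsum : B.mulVec (∑ i, a i • g i) ≠ 0) :
    c ⬝ᵥ (∑ i, a i • g i) / (∑ l, |B.mulVec (∑ i, a i • g i) l|) <
      c ⬝ᵥ g ⟨0, hj⟩ / (∑ l, |B.mulVec (g ⟨0, hj⟩) l|) :=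
  orthant_change_strict_decrease_general B c hj g a hB heq hcneg hlt hBsum
end

section
/- Let M ∈ ℝ^{m×n} be totally unimodular with rank n, and let g ∈ ℝ^n generate the kernel of an (n−1)-row submatrix M' of M with rank(M') = n−1, normalized to coprime integer components. Then every entry of g and of Mg lies in {−1, 0, 1}. -/
/-!
The signed maximal minors of `M' = M.submatrix r id` form a vector `crossVec M'` with
`w ⬝ᵥ crossVec M' = det (w; M')` (Laplace expansion along the prepended row `w`); hence it
lies in the kernel of `M'` and equals `α • g`. Here `α ≠ 0` because `(g; M')` is nonsingular:
a kernel vector of it is some `β • g`, and then `β (g ⬝ᵥ g) = 0`.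
Total unimodularity puts the entries of `α • z` and `α • M z` (determinants of `(M i; M')`)
in `{-1, 0, 1}`. Bézout for the coprime `z` makes `α` an integer, and a nonzero integer
multiple of an integer lies in `{-1, 0, 1}` only if the integer does.
-/

open Matrix Set

theorem SignType.mem_range_cast_iff {R : Type*} [Zero R] [One R] [Neg R] {x : R} :
    x ∈ range SignType.cast ↔ x = -1 ∨ x = 0 ∨ x = 1 := by
  rw [SignType.range_eq]
  simp only [mem_insert_iff, mem_singleton_iff]
  tauto

theorem SignType.range_cast_subset_range_intCast {R : Type*} [AddGroupWithOne R] :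
    range (SignType.cast : SignType → R) ⊆ range ((↑) : ℤ → R) := by
  rintro _ ⟨s, rfl⟩
  exact ⟨s, SignType.intCast_cast s⟩

theorem Int.mem_range_signType_cast_of_mul {a t : ℤ} (ha : a ≠ 0)
    (h : a * t ∈ Set.range SignType.cast) : t ∈ Set.range SignType.cast := by
  rw [SignType.mem_range_cast_iff] at h ⊢
  have hat : |a| * |t| ≤ 1 := by rw [← abs_mul]; rcases h with h | h | h <;> simp [h]
  have ht : |t| ≤ 1 := by nlinarith [Int.one_le_abs ha, abs_nonneg t]
  rw [abs_le] at ht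
  omega

theorem intCast_mem_range_signType_cast_iff {R : Type*} [AddGroupWithOne R] [CharZero R]
    {x : ℤ} : (x : R) ∈ range SignType.cast ↔ x ∈ range SignType.cast := by
  refine ⟨fun ⟨s, hs⟩ => ⟨s, Int.cast_injective ((SignType.intCast_cast s).trans hs)⟩,
    fun ⟨s, hs⟩ => ⟨s, by rw [← hs, SignType.intCast_cast]⟩⟩

theorem intCast_mem_range_signType_cast_of_mul {R : Type*} [Ring R] [CharZero R] {a t : ℤ}
    (ha : a ≠ 0) (h : (a : R) * t ∈ range SignType.cast) : (t : R) ∈ range SignType.cast := by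
  rw [← Int.cast_mul, intCast_mem_range_signType_cast_iff] at h
  exact intCast_mem_range_signType_cast_iff.mpr (Int.mem_range_signType_cast_of_mul ha h)

theorem mem_range_intCast_of_gcd_eq_one {R ι : Type*} [CommRing R] {s : Finset ι} {z : ι → ℤ}
    (hz : s.gcd z = 1) {α : R} (h : ∀ i ∈ s, α * z i ∈ range ((↑) : ℤ → R)) :
    α ∈ range ((↑) : ℤ → R) := by
  obtain ⟨c, hc⟩ := Finset.gcd_eq_sum_mul s z
  have hα : α = ∑ i ∈ s, α * z i * c i :=
    calc α = α * ((s.gcd z : ℤ) : R) := by rw [hz, Int.cast_one, mul_one]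
      _ = ∑ i ∈ s, α * z i * c i := by
        simp only [hc, Int.cast_sum, Int.cast_mul, Finset.mul_sum, mul_assoc]
  rw [hα, ← Subring.coe_bot, SetLike.mem_coe]
  exact Subring.sum_mem _ fun i hi =>
    Subring.mul_mem _ (Subring.mem_bot.mpr (h i hi)) (intCast_mem _ _)

namespace Matrix

section CrossVec

variable {R : Type*} [CommRing R] {k : ℕ}

def crossVec (A : Matrix (Fin k) (Fin (k + 1)) R) : Fin (k + 1) → R :=
  fun j => (-1) ^ (j : ℕ) * (A.submatrix id j.succAbove).det

theorem det_of_vecCons (w : Fin (k + 1) → R) (A : Matrix (Fin k) (Fin (k + 1)) R) :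
    (of (vecCons w A)).det = w ⬝ᵥ crossVec A := by
  rw [det_succ_row_zero, dotProduct]
  refine Finset.sum_congr rfl fun j _ => ?_
  have hminor : (of (vecCons w A)).submatrix Fin.succ j.succAbove = A.submatrix id j.succAbove :=
    rfl
  rw [hminor, crossVec, of_apply]
  change (-1) ^ (j : ℕ) * w j * _ = _
  ring

theorem mulVec_crossVec (A : Matrix (Fin k) (Fin (k + 1)) R) : A *ᵥ crossVec A = 0 := by
  ext i
  rw [mulVec, ← det_of_vecCons]
  exact det_zero_of_row_eq (Fin.succ_ne_zero i).symm rfl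

end CrossVec

section OrderedField

variable {K : Type*} [Field K] [LinearOrder K] [IsStrictOrderedRing K] {k : ℕ}
  {A : Matrix (Fin k) (Fin (k + 1)) K} {g : Fin (k + 1) → K}

theorem det_of_vecCons_ne_zero (hg : g ≠ 0) (hker : ∀ y, A *ᵥ y = 0 → ∃ α : K, y = α • g) :
    (of (vecCons g A)).det ≠ 0 := by
  intro hdet
  obtain ⟨y, hy0, hy⟩ := exists_mulVec_eq_zero_iff.mpr hdet
  obtain ⟨β, rfl⟩ := hker y (funext fun i => congrFun hy i.succ)
  have hβ : β * (g ⬝ᵥ g) = 0 := by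
    rw [← smul_eq_mul, ← dotProduct_smul]
    exact congrFun hy 0
  have hgg : g ⬝ᵥ g ≠ 0 := fun h => hg (dotProduct_self_eq_zero.mp h)
  obtain rfl : β = 0 := (mul_eq_zero.mp hβ).resolve_right hgg
  exact hy0 (zero_smul K g)

theorem exists_crossVec_eq_smul (hg : g ≠ 0) (hker : ∀ y, A *ᵥ y = 0 → ∃ α : K, y = α • g) :
    ∃ α : K, α ≠ 0 ∧ crossVec A = α • g := by
  obtain ⟨α, hα⟩ := hker _ (mulVec_crossVec A)
  refine ⟨α, fun hα0 => det_of_vecCons_ne_zero hg hker ?_, hα⟩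
  rw [det_of_vecCons, hα, hα0, zero_smul, dotProduct_zero]

end OrderedField

section TotallyUnimodular

variable {m n R : Type*} [CommRing R]

theorem IsTotallyUnimodular.crossVec_mem {k : ℕ} {A : Matrix (Fin k) (Fin (k + 1)) R}
    (hA : A.IsTotallyUnimodular) (j : Fin (k + 1)) : crossVec A j ∈ range SignType.cast := by
  obtain ⟨s, hs⟩ := (isTotallyUnimodular_iff A).mp hA k id j.succAbove
  rcases neg_one_pow_eq_or R (j : ℕ) with h | h
  · exact ⟨s, by rw [crossVec, h, one_mul, hs]⟩
  · exact ⟨-s, by rw [crossVec, h, neg_one_mul, ← hs, SignType.coe_neg]⟩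

theorem IsTotallyUnimodular.dotProduct_crossVec_mem {k : ℕ}
    {M : Matrix m (Fin (k + 1)) R} (hM : M.IsTotallyUnimodular) (r : Fin k → m) (i : m) :
    M i ⬝ᵥ crossVec (M.submatrix r id) ∈ range SignType.cast := by
  have hrows : of (vecCons (M i) (M.submatrix r id)) = M.submatrix (Fin.cons i r) id := by
    ext a b
    cases a using Fin.cases <;> rfl
  rw [← det_of_vecCons, hrows]
  exact (isTotallyUnimodular_iff M).mp hM _ _ _

theorem IsTotallyUnimodular.mulVec_intCast_mem [Fintype n] {M : Matrix m n R}
    (hM : M.IsTotallyUnimodular) (z : n → ℤ) (i : m) :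
    (M *ᵥ fun j => (z j : R)) i ∈ range ((↑) : ℤ → R) := by
  rw [← Subring.coe_bot, SetLike.mem_coe]
  refine Subring.sum_mem _ fun j _ => Subring.mul_mem _ ?_ (intCast_mem _ _)
  exact Subring.mem_bot.mpr (SignType.range_cast_subset_range_intCast (hM.apply i j))

end TotallyUnimodular

end Matrix

theorem tu_circuit_entries_general {m n : ℕ}
    (M : Matrix (Fin m) (Fin n) ℝ)
    (hTU : ∀ (k : ℕ) (r : Fin k → Fin m) (c : Fin k → Fin n),
      (M.submatrix r c).det = -1 ∨ (M.submatrix r c).det = 0 ∨ (M.submatrix r c).det = 1)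
    (r : Fin (n - 1) → Fin m)
    (g : Fin n → ℝ) (hg0 : g ≠ 0)
    (hgen : ∀ y : Fin n → ℝ, (M.submatrix r id).mulVec y = 0 → ∃ α : ℝ, y = α • g)
    (z : Fin n → ℤ) (hz : g = fun i => (z i : ℝ)) (hcop : Finset.univ.gcd z = 1) :
    (∀ i, g i = -1 ∨ g i = 0 ∨ g i = 1) ∧
      (∀ i, M.mulVec g i = -1 ∨ M.mulVec g i = 0 ∨ M.mulVec g i = 1) := by
  obtain ⟨k, rfl⟩ : ∃ k, n = k + 1 :=
    Nat.exists_eq_succ_of_ne_zero (by rintro rfl; exact hg0 (Subsingleton.elim _ _))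
  have hM : M.IsTotallyUnimodular := (isTotallyUnimodular_iff M).mpr fun k r c =>
    SignType.mem_range_cast_iff.mpr (hTU k r c)
  obtain ⟨α, hα0, hα⟩ := exists_crossVec_eq_smul hg0 hgen
  subst hz
  have hcross (j : Fin (k + 1)) : α * z j ∈ range SignType.cast := by
    simpa [hα] using (hM.submatrix r id).crossVec_mem j
  obtain ⟨a, rfl⟩ := mem_range_intCast_of_gcd_eq_one hcop fun j _ =>
    SignType.range_cast_subset_range_intCast (hcross j)
  have ha0 : a ≠ 0 := by exact_mod_cast hα0
  refine ⟨fun j => ?_, fun i => ?_⟩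
  · exact SignType.mem_range_cast_iff.mp (intCast_mem_range_signType_cast_of_mul ha0 (hcross j))
  · obtain ⟨t, ht⟩ := hM.mulVec_intCast_mem z i
    have hrow : (a : ℝ) * t ∈ range SignType.cast := by
      rw [ht, mulVec, ← smul_eq_mul, ← dotProduct_smul, ← hα]
      exact hM.dotProduct_crossVec_mem r i
    rw [← ht]
    exact SignType.mem_range_cast_iff.mp (intCast_mem_range_signType_cast_of_mul ha0 hrow)

/-- Let `M ∈ ℝ^{m×n}` be totally unimodular with rank `n`, and let `g`
(normalized to coprime integer components) generate the kernel of an `(n-1)`-row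
submatrix `M'` of `M` with `rank M' = n - 1`. Then every entry of `g` and of `Mg`
lies in `{-1, 0, 1}`. -/
theorem tu_circuit_entries {m n : ℕ}
    (M : Matrix (Fin m) (Fin n) ℝ)
    (hTU : ∀ (k : ℕ) (r : Fin k → Fin m) (c : Fin k → Fin n),
      (M.submatrix r c).det = -1 ∨ (M.submatrix r c).det = 0 ∨ (M.submatrix r c).det = 1)
    (hrank : M.rank = n)
    (r : Fin (n - 1) → Fin m) (hr : Function.Injective r)
    (hrkM' : (M.submatrix r id).rank = n - 1)
    (g : Fin n → ℝ) (hg0 : g ≠ 0)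
    (hker : (M.submatrix r id).mulVec g = 0)
    (hgen : ∀ y : Fin n → ℝ, (M.submatrix r id).mulVec y = 0 → ∃ α : ℝ, y = α • g)
    (z : Fin n → ℤ) (hz : g = fun i => (z i : ℝ)) (hcop : Finset.univ.gcd z = 1) :
    (∀ i, g i = -1 ∨ g i = 0 ∨ g i = 1) ∧
      (∀ i, M.mulVec g i = -1 ∨ M.mulVec g i = 0 ∨ M.mulVec g i = 1) :=
  tu_circuit_entries_general M hTU r g hg0 hgen z hz hcop
end

section
/- Let P = {x : Ax = b, Bx ≤ d} be an integral polyhedron with (A;B) totally unimodular, and let v₁, v₂ ∈ P be integral. If v₂ − v₁ = Σ_{i=1}^t λ_i g_i is a sign-compatible sum of circuits produced by the greedy step-length rule λ_i = min{(Bw_i)_j/(Bg_i)_j : (Bw_i)_j(Bg_i)_j > 0} (where w_i is the remaining difference), then every λ_i is a positive integer and every intermediate point v₁ + Σ_{i≤j} λ_i g_i is integral. -/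
/-!
Write `C = (A;B)` and let `g` be a circuit scaled to a primitive integer vector. Minimality of its
`B`-support means that `g` spans the space of all `y` with `(Cy)_i = 0` wherever `(Cg)_i = 0`.
Hence for a row `r` with `(Cg)_r ≠ 0`, the rows annihilating `g` together with row `r` have
trivial common kernel, so they contain a nonsingular square submatrix `N`, unimodular because `C`
is totally unimodular. Since `N g = (Cg)_r · e` for a `0/1` vector `e`, the integer `(Cg)_r` divides
every entry of `g`, so it is `±1`. The greedy step length `(Bw_i)_j / (Bg_i)_j` is therefore an
integer, positive by the choice of `j`, and by induction every remaining difference `w_i`, hence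
every intermediate point `v₂ - w_i`, is integral.
-/
open Matrix Finset

namespace Matrix

variable {m n : Type*}

lemma isTotallyUnimodular_of_det_eq {R : Type*} [CommRing R] {C : Matrix m n R}
    (h : ∀ (k : ℕ) (r : Fin k → m) (c : Fin k → n), (C.submatrix r c).det = -1 ∨
      (C.submatrix r c).det = 0 ∨ (C.submatrix r c).det = 1) :
    C.IsTotallyUnimodular := by
  rw [isTotallyUnimodular_iff]
  intro k r c
  rcases h k r c with h | h | h <;> rw [h]
  exacts [⟨-1, by simp⟩, ⟨0, by simp⟩, ⟨1, by simp⟩]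

lemma IsTotallyUnimodular.exists_map_intCast_eq {R : Type*} [CommRing R] [CharZero R]
    {C : Matrix m n R} (hC : C.IsTotallyUnimodular) :
    ∃ Z : Matrix m n ℤ, Z.IsTotallyUnimodular ∧ Z.map (Int.cast : ℤ → R) = C := by
  choose s hs using hC.apply
  set Z : Matrix m n ℤ := of fun i j => (s i j : ℤ)
  have hZC : Z.map (Int.cast : ℤ → R) = C := by
    ext i j
    simp [Z, hs]
  refine ⟨Z, ?_, hZC⟩
  rw [isTotallyUnimodular_iff] at hC ⊢
  intro k f g
  obtain ⟨u, hu⟩ := hC k f g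
  refine ⟨u, Int.cast_injective (α := R) ?_⟩
  rw [SignType.intCast_cast, hu, Int.cast_det, ← hZC]
  rfl

lemma IsTotallyUnimodular.isUnit_det_of_ne_zero [Fintype n] [DecidableEq n] {Z : Matrix m n ℤ}
    (hZ : Z.IsTotallyUnimodular) (f : n → m) (hf : (Z.submatrix f id).det ≠ 0) :
    IsUnit (Z.submatrix f id).det := by
  obtain ⟨s, hs⟩ := (isTotallyUnimodular_iff_fintype Z).mp hZ n f id
  rw [← hs] at hf ⊢
  cases s <;> simp at hf ⊢

lemma exists_det_submatrix_ne_zero {K : Type*} [Field K] [Fintype m] [Fintype n] [DecidableEq n]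
    (M : Matrix m n K) (hM : ∀ y, M *ᵥ y = 0 → y = 0) :
    ∃ f : n → m, (M.submatrix f id).det ≠ 0 := by
  obtain ⟨κ, a, -, hspan, hli⟩ := exists_linearIndependent' K M.row
  have : Fintype κ := @Fintype.ofFinite κ hli.finite
  have hrank : M.rank = Fintype.card n := by
    have hinj : Function.Injective M.mulVecLin :=
      (injective_iff_map_eq_zero _).mpr hM
    rw [Matrix.rank, LinearMap.finrank_range_of_inj hinj, Module.finrank_fintype_fun_eq_card]
  rw [rank_eq_finrank_span_row, ← hspan, finrank_span_eq_card hli] at hrank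
  let e := (Fintype.equivOfCardEq hrank).symm
  refine ⟨a ∘ e, ?_⟩
  rw [← isUnit_iff_ne_zero, ← isUnit_iff_isUnit_det, ← linearIndependent_rows_iff_isUnit]
  exact hli.comp e e.injective

lemma dvd_of_mulVec_eq_smul {R : Type*} [CommRing R] [Fintype n] [DecidableEq n]
    {N : Matrix n n R} (hN : IsUnit N.det) {x y : n → R} {c : R} (h : N *ᵥ x = c • y) (l : n) :
    c ∣ x l := by
  have hx : x = c • (N⁻¹ *ᵥ y) := by
    rw [← mulVec_smul, ← h, mulVec_mulVec, nonsing_inv_mul N hN, one_mulVec]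
  rw [hx]
  exact dvd_mul_right _ _

lemma map_intCast_mulVec {R : Type*} [Ring R] [Fintype n] (Z : Matrix m n ℤ) (z : n → ℤ) :
    Z.map (Int.cast : ℤ → R) *ᵥ (fun l => (z l : R)) = fun i => ((Z *ᵥ z) i : R) :=
  funext fun i => (RingHom.map_mulVec (Int.castRingHom R) Z z i).symm

theorem IsTotallyUnimodular.isUnit_mulVec_of_elementary {K : Type*} [Field K] [CharZero K]
    [Fintype m] [Fintype n] [DecidableEq n] {Z : Matrix m n ℤ} (hZ : Z.IsTotallyUnimodular)
    {z : n → ℤ} (hz : univ.gcd z = 1)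
    (helem : ∀ y : n → K, (∀ i, (Z *ᵥ z) i = 0 → (Z.map (Int.cast : ℤ → K) *ᵥ y) i = 0) →
      ∃ c : K, y = c • fun l => (z l : K))
    {r : m} (hr : (Z *ᵥ z) r ≠ 0) : IsUnit ((Z *ᵥ z) r) := by
  classical
  let M : Matrix {i // (Z *ᵥ z) i = 0 ∨ i = r} n K := (Z.map Int.cast).submatrix Subtype.val id
  have hM : ∀ y, M *ᵥ y = 0 → y = 0 := by
    intro y hy
    have hy' : ∀ i, (Z *ᵥ z) i = 0 ∨ i = r → (Z.map (Int.cast : ℤ → K) *ᵥ y) i = 0 :=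
      fun i hi => congrFun hy ⟨i, hi⟩
    obtain ⟨c, rfl⟩ := helem y fun i hi => hy' i (.inl hi)
    have hc := hy' r (.inr rfl)
    rw [mulVec_smul, map_intCast_mulVec, Pi.smul_apply, smul_eq_mul, mul_eq_zero] at hc
    rw [hc.resolve_right (Int.cast_ne_zero.mpr hr), zero_smul]
  obtain ⟨f, hf⟩ := exists_det_submatrix_ne_zero M hM
  set N := Z.submatrix (Subtype.val ∘ f) id
  have hN : IsUnit N.det := by
    refine hZ.isUnit_det_of_ne_zero _ fun h => hf ?_
    rw [← Int.cast_eq_zero (α := K), Int.cast_det] at h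
    exact h
  have hNz : N *ᵥ z = (Z *ᵥ z) r • fun k => if (f k : m) = r then 1 else 0 := by
    ext k
    change (Z *ᵥ z) (f k) = _
    by_cases hk : (f k : m) = r
    · simp [hk]
    · simp [hk, (f k).2.resolve_right hk]
  exact isUnit_of_dvd_one (hz ▸ dvd_gcd fun l _ => dvd_of_mulVec_eq_smul hN hNz l)

lemma exists_eq_smul_of_fromRows_mulVec_support {K p : Type*} [Field K] [Fintype n]
    {A : Matrix m n K} {B : Matrix p n K} {g : n → K} (hAg : A *ᵥ g = 0)
    (hmin : ¬ ∃ y : n → K, y ≠ 0 ∧ A *ᵥ y = 0 ∧ {j | (B *ᵥ y) j ≠ 0} ⊂ {j | (B *ᵥ g) j ≠ 0})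
    {j : p} (hj : (B *ᵥ g) j ≠ 0) {y : n → K}
    (hy : ∀ i, (fromRows A B *ᵥ g) i = 0 → (fromRows A B *ᵥ y) i = 0) :
    ∃ c : K, y = c • g := by
  have hAy : A *ᵥ y = 0 := funext fun i => by simpa [fromRows_mulVec, hAg] using hy (.inl i)
  have hBy : ∀ j', (B *ᵥ g) j' = 0 → (B *ᵥ y) j' = 0 := fun j' h => by
    simpa [fromRows_mulVec] using hy (.inr j') (by simpa [fromRows_mulVec] using h)
  -- `(Bg)_j y - (By)_j g` has a smaller `B`-support than `g`, as it vanishes at `j`.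
  have hcomb : (B *ᵥ g) j • y - (B *ᵥ y) j • g = 0 := by
    by_contra hne
    refine hmin ⟨_, hne, by simp [mulVec_sub, mulVec_smul, hAy, hAg], ?_⟩
    rw [Set.ssubset_iff_of_subset]
    · exact ⟨j, hj, by simp [mulVec_sub, mulVec_smul, mul_comm]⟩
    · intro j' hj' hg
      simp [mulVec_sub, mulVec_smul, hg, hBy j' hg] at hj'
  refine ⟨(B *ᵥ y) j / (B *ᵥ g) j, funext fun l => ?_⟩
  have hl := congrFun (sub_eq_zero.mp hcomb) l
  simp only [Pi.smul_apply, smul_eq_mul] at hl ⊢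
  field_simp
  linear_combination hl

lemma mulVec_intCast_eq_of_map_eq_fromRows {R p : Type*} [Ring R] [Fintype n]
    {A : Matrix m n R} {B : Matrix p n R} {Z : Matrix (m ⊕ p) n ℤ}
    (hZ : Z.map Int.cast = fromRows A B) (z : n → ℤ) (j : p) :
    (B *ᵥ fun l => (z l : R)) j = ((Z *ᵥ z) (.inr j) : R) := by
  rw [← congrFun (map_intCast_mulVec Z z) (.inr j), hZ, fromRows_mulVec]
  rfl

theorem IsTotallyUnimodular.isUnit_mulVec_of_circuit {K p : Type*} [Field K] [CharZero K]
    [Fintype m] [Fintype p] [Fintype n] [DecidableEq n] {A : Matrix m n K} {B : Matrix p n K}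
    {Z : Matrix (m ⊕ p) n ℤ} (hZ : Z.IsTotallyUnimodular) (hZAB : Z.map Int.cast = fromRows A B)
    {z : n → ℤ} (hz : univ.gcd z = 1) (hAg : A *ᵥ (fun l => (z l : K)) = 0)
    (hmin : ¬ ∃ y : n → K, y ≠ 0 ∧ A *ᵥ y = 0 ∧
      {j | (B *ᵥ y) j ≠ 0} ⊂ {j | (B *ᵥ fun l => (z l : K)) j ≠ 0})
    {j : p} (hj : (B *ᵥ fun l => (z l : K)) j ≠ 0) :
    ∃ u : ℤ, IsUnit u ∧ (B *ᵥ fun l => (z l : K)) j = u := by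
  have hBz := mulVec_intCast_eq_of_map_eq_fromRows hZAB z j
  refine ⟨_, hZ.isUnit_mulVec_of_elementary (K := K) hz (fun y hy => ?_) ?_, hBz⟩
  · refine exists_eq_smul_of_fromRows_mulVec_support hAg hmin hj fun i hi => ?_
    rw [← hZAB, map_intCast_mulVec] at hi
    rw [← hZAB]
    exact hy i (Int.cast_eq_zero.mp hi)
  · exact_mod_cast hBz ▸ hj

end Matrix

lemma exists_pos_int_eq_div {K : Type*} [Field K] [LinearOrder K] [IsStrictOrderedRing K]
    {a u : ℤ} (hu : IsUnit u) (h : 0 < (a : K) * u) : ∃ k : ℤ, 0 < k ∧ (a : K) / u = k := by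
  rcases Int.isUnit_iff.mp hu with rfl | rfl
  · exact ⟨a, by simpa using h, by simp⟩
  · exact ⟨-a, by simpa using h, by simp [div_neg]⟩

lemma sum_filter_lt_eq_sub {V : Type*} [AddCommGroup V] {t : ℕ} (x : Fin t → V) (w : ℕ → V)
    (hw : ∀ i : Fin t, w (i + 1) = w i - x i) {i : ℕ} (hi : i ≤ t) :
    ∑ l ∈ univ.filter (fun l : Fin t => (l : ℕ) < i), x l = w 0 - w i := by
  induction i with
  | zero => simp
  | succ i ih =>
    have hfilter : univ.filter (fun l : Fin t => (l : ℕ) < i + 1) =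
        insert ⟨i, hi⟩ (univ.filter fun l : Fin t => (l : ℕ) < i) := by
      ext l
      simp only [mem_filter, mem_insert, mem_univ, true_and, Fin.ext_iff]
      omega
    rw [hfilter, sum_insert (by simp), ih (by omega), hw ⟨i, hi⟩]
    abel

theorem tu_walk_integral_general {n mA mB : ℕ}
    (A : Matrix (Fin mA) (Fin n) ℝ) (B : Matrix (Fin mB) (Fin n) ℝ)
    (hTU : ∀ (k : ℕ) (r : Fin k → Fin mA ⊕ Fin mB) (c : Fin k → Fin n),
      ((Matrix.fromRows A B).submatrix r c).det = -1 ∨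
      ((Matrix.fromRows A B).submatrix r c).det = 0 ∨
      ((Matrix.fromRows A B).submatrix r c).det = 1)
    (v₁ v₂ : Fin n → ℝ)
    (z₁ z₂ : Fin n → ℤ) (hv₁int : v₁ = fun i => (z₁ i : ℝ)) (hv₂int : v₂ = fun i => (z₂ i : ℝ))
    (t : ℕ) (g : Fin t → Fin n → ℝ) (lam : Fin t → ℝ) (w : ℕ → Fin n → ℝ)
    (hw0 : w 0 = v₂ - v₁)
    (hwrec : ∀ i : Fin t, w (i + 1) = w i - lam i • g i)
    -- each g i is a circuit of P, normalized to coprime integer components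
    (hcirc : ∀ i : Fin t,
      (∃ zg : Fin n → ℤ, g i = (fun j => (zg j : ℝ)) ∧ Finset.univ.gcd zg = 1) ∧
      g i ≠ 0 ∧ A.mulVec (g i) = 0 ∧
      ¬ ∃ y : Fin n → ℝ, y ≠ 0 ∧ A.mulVec y = 0 ∧
        {j | B.mulVec y j ≠ 0} ⊂ {j | B.mulVec (g i) j ≠ 0})
    -- greedy step-length rule
    (hgreedy : ∀ i : Fin t, ∃ j : Fin mB,
      0 < B.mulVec (w i) j * B.mulVec (g i) j ∧
      lam i = B.mulVec (w i) j / B.mulVec (g i) j ∧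
      ∀ j' : Fin mB, 0 < B.mulVec (w i) j' * B.mulVec (g i) j' →
        lam i ≤ B.mulVec (w i) j' / B.mulVec (g i) j') :
    (∀ i : Fin t, ∃ k : ℤ, 0 < k ∧ lam i = (k : ℝ)) ∧
    (∀ i : ℕ, i ≤ t → ∃ zv : Fin n → ℤ,
      (v₁ + ∑ l ∈ Finset.univ.filter (fun l : Fin t => (l : ℕ) < i), lam l • g l)
        = fun j => (zv j : ℝ)) := by
  obtain ⟨Z, hZ, hZAB⟩ := (isTotallyUnimodular_of_det_eq hTU).exists_map_intCast_eq
  choose zg hzg hgcd using fun i => (hcirc i).1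
  have hlam : ∀ (i : Fin t) (zw : Fin n → ℤ), w i = (fun l => (zw l : ℝ)) →
      ∃ k : ℤ, 0 < k ∧ lam i = k := by
    intro i zw hzw
    obtain ⟨-, -, hAg, hmin⟩ := hcirc i
    obtain ⟨j, hpos, hlam_eq, -⟩ := hgreedy i
    rw [hzg i] at hAg hmin hpos hlam_eq
    obtain ⟨u, hu, hBg⟩ := hZ.isUnit_mulVec_of_circuit hZAB (hgcd i) hAg hmin
      (right_ne_zero_of_mul hpos.ne')
    rw [hBg, hzw, mulVec_intCast_eq_of_map_eq_fromRows hZAB] at hpos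
    rw [hlam_eq, hBg, hzw, mulVec_intCast_eq_of_map_eq_fromRows hZAB]
    exact exists_pos_int_eq_div hu hpos
  have hwint : ∀ i ≤ t, ∃ zw : Fin n → ℤ, w i = fun l => (zw l : ℝ) := by
    intro i hi
    induction i with
    | zero => exact ⟨z₂ - z₁, by rw [hw0, hv₁int, hv₂int]; ext; simp⟩
    | succ i ih =>
      obtain ⟨zw, hzw⟩ := ih (by omega)
      obtain ⟨k, -, hk⟩ := hlam ⟨i, hi⟩ zw hzw
      exact ⟨zw - k • zg ⟨i, hi⟩, by rw [hwrec ⟨i, hi⟩, hzw, hk, hzg]; ext; simp⟩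
  refine ⟨fun i => ?_, fun i hi => ?_⟩
  · obtain ⟨zw, hzw⟩ := hwint i i.isLt.le
    exact hlam i zw hzw
  · obtain ⟨zw, hzw⟩ := hwint i hi
    refine ⟨z₂ - zw, ?_⟩
    rw [sum_filter_lt_eq_sub _ w hwrec hi, hw0, hzw, hv₁int, hv₂int]
    ext l
    simp only [Pi.add_apply, Pi.sub_apply, Int.cast_sub]
    ring

/-- Let `P = {x : Ax = b, Bx ≤ d}` be an integral pointed polyhedron with
`(A;B)` totally unimodular, and `v₁, v₂ ∈ P` integral. If `v₂ - v₁ = Σ λ_i g_i` is a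
sign-compatible sum of circuits (normalized to coprime integer components) produced by
the greedy step-length rule `λ_i = min{(Bw_i)_j/(Bg_i)_j : (Bw_i)_j (Bg_i)_j > 0}`
(where `w_i` is the remaining difference), then each `λ_i` is a positive integer and
every intermediate point `v₁ + Σ_{l<i} λ_l g_l` is integral. -/
theorem tu_walk_integral {n mA mB : ℕ}
    (A : Matrix (Fin mA) (Fin n) ℝ) (B : Matrix (Fin mB) (Fin n) ℝ)
    (hTU : ∀ (k : ℕ) (r : Fin k → Fin mA ⊕ Fin mB) (c : Fin k → Fin n),
      ((Matrix.fromRows A B).submatrix r c).det = -1 ∨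
      ((Matrix.fromRows A B).submatrix r c).det = 0 ∨
      ((Matrix.fromRows A B).submatrix r c).det = 1)
    (hpointed : (Matrix.fromRows A B).rank = n)
    (b : Fin mA → ℝ) (d : Fin mB → ℝ)
    (v₁ v₂ : Fin n → ℝ)
    (z₁ z₂ : Fin n → ℤ) (hv₁int : v₁ = fun i => (z₁ i : ℝ)) (hv₂int : v₂ = fun i => (z₂ i : ℝ))
    (hv₁P : A.mulVec v₁ = b ∧ ∀ i, B.mulVec v₁ i ≤ d i)
    (hv₂P : A.mulVec v₂ = b ∧ ∀ i, B.mulVec v₂ i ≤ d i)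
    (t : ℕ) (g : Fin t → Fin n → ℝ) (lam : Fin t → ℝ) (w : ℕ → Fin n → ℝ)
    (hw0 : w 0 = v₂ - v₁)
    (hwrec : ∀ i : Fin t, w (i + 1) = w i - lam i • g i)
    (hwt : w t = 0)
    -- each g i is a circuit of P, normalized to coprime integer components
    (hcirc : ∀ i : Fin t,
      (∃ zg : Fin n → ℤ, g i = (fun j => (zg j : ℝ)) ∧ Finset.univ.gcd zg = 1) ∧
      g i ≠ 0 ∧ A.mulVec (g i) = 0 ∧
      ¬ ∃ y : Fin n → ℝ, y ≠ 0 ∧ A.mulVec y = 0 ∧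
        {j | B.mulVec y j ≠ 0} ⊂ {j | B.mulVec (g i) j ≠ 0})
    -- sign-compatibility of each B g i with the remaining difference B w i
    (hsign : ∀ (i : Fin t) (j : Fin mB), 0 ≤ B.mulVec (g i) j * B.mulVec (w i) j)
    -- greedy step-length rule
    (hgreedy : ∀ i : Fin t, ∃ j : Fin mB,
      0 < B.mulVec (w i) j * B.mulVec (g i) j ∧
      lam i = B.mulVec (w i) j / B.mulVec (g i) j ∧
      ∀ j' : Fin mB, 0 < B.mulVec (w i) j' * B.mulVec (g i) j' →
        lam i ≤ B.mulVec (w i) j' / B.mulVec (g i) j') :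
    (∀ i : Fin t, ∃ k : ℤ, 0 < k ∧ lam i = (k : ℝ)) ∧
    (∀ i : ℕ, i ≤ t → ∃ zv : Fin n → ℤ,
      (v₁ + ∑ l ∈ Finset.univ.filter (fun l : Fin t => (l : ℕ) < i), lam l • g l)
        = fun j => (zv j : ℝ)) :=
  tu_walk_integral_general A B hTU v₁ v₂ z₁ z₂ hv₁int hv₂int t g lam w hw0 hwrec hcirc hgreedy
end
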